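/- arXiv:2412.04504 — 8 statements merged into one kernel-verified Lean document; each statement's English description precedes it below -/
import Mathlib

section
/- Let B ≥ 2 and k ≥ 2 be integers and let l_min < l_max be real numbers. For real numbers l_1, …, l_{k−1} with l_min = l_0 ≤ l_1 ≤ … ≤ l_{k−1} ≤ l_k = l_max, define f_k(l_1, …, l_{k−1}) = Σ_{i=1}^{k} ((l_i − l_{i−1})/(l_max − l_min)) · ((B/(B+1)) l_i + (1/(B+1)) l_{i−1}). Then f_k attains its minimum over this domain exactly at the equally spaced boundaries l_i = l_min + (i/k)(l_max − l_min) for i = 1, …, k−1. -/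
open Finset

/-- Expected service time of a batch of `B` requests under `k`-bin batching with bin
boundaries `m 0 ≤ m 1 ≤ … ≤ m k`, when service times are i.i.d. uniform on
`[lmin, lmax]`: a request whose service time lies in `[m (i-1), m i]` is assigned to
bin `i`, and the expected maximum of `B` i.i.d. uniforms on `[a, b]` is
`(B/(B+1)) b + (1/(B+1)) a`. -/
noncomputable def binServiceTime (B k : ℕ) (lmin lmax : ℝ) (m : ℕ → ℝ) : ℝ :=
  ∑ i ∈ Finset.range k,
    ((m (i + 1) - m i) / (lmax - lmin)) *
      (((B : ℝ) / (B + 1)) * m (i + 1) + (1 / (B + 1)) * m i)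

/-- The equally spaced bin boundaries `l_i = l_min + (i/k)(l_max − l_min)`. -/
noncomputable def equalBoundaries (k : ℕ) (lmin lmax : ℝ) (i : ℕ) : ℝ :=
  lmin + ((i : ℝ) / k) * (lmax - lmin)

lemma bst_key (B k : ℕ) (lmin lmax : ℝ) (hl : lmin < lmax) (l : ℕ → ℝ)
    (h0 : l 0 = lmin) (hk : l k = lmax) :
    2 * ((B:ℝ)+1) * (lmax - lmin) * binServiceTime B k lmin lmax l
      = ((B:ℝ)+1) * (lmax^2 - lmin^2)
        + ((B:ℝ)-1) * ∑ i ∈ Finset.range k, (l (i+1) - l i)^2 := by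
  have hL : lmax - lmin ≠ 0 := sub_ne_zero.mpr hl.ne'
  have hB1 : (B:ℝ) + 1 ≠ 0 := by positivity
  unfold binServiceTime
  rw [Finset.mul_sum]
  have hterm : ∀ i ∈ Finset.range k,
      2 * ((B:ℝ)+1) * (lmax - lmin) *
        (((l (i+1) - l i) / (lmax - lmin)) *
          (((B:ℝ)/(B+1)) * l (i+1) + (1/(B+1)) * l i))
      = ((B:ℝ)+1) * ((l (i+1))^2 - (l i)^2) + ((B:ℝ)-1) * (l (i+1) - l i)^2 := by
    intro i _
    field_simp
    ring
  rw [Finset.sum_congr rfl hterm, Finset.sum_add_distrib, ← Finset.mul_sum,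
    ← Finset.mul_sum, Finset.sum_range_sub (fun i => (l i)^2), h0, hk]


/-- for `B ≥ 2`, `k ≥ 2` and `l_min < l_max`, the expected batch service
time `f_k` attains its minimum over all admissible (monotone) boundary vectors exactly
at the equally spaced boundaries. -/
theorem multibin_uniform_optimal_boundaries (B k : ℕ) (hB : 2 ≤ B) (hk : 2 ≤ k)
    (lmin lmax : ℝ) (hl : lmin < lmax) :
    ∀ l : ℕ → ℝ, l 0 = lmin → l k = lmax → (∀ i, i < k → l i ≤ l (i + 1)) →
      binServiceTime B k lmin lmax (equalBoundaries k lmin lmax) ≤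
          binServiceTime B k lmin lmax l ∧
        (binServiceTime B k lmin lmax l =
            binServiceTime B k lmin lmax (equalBoundaries k lmin lmax) →
          ∀ i ≤ k, l i = equalBoundaries k lmin lmax i) := by
  intro l h0 hkl _hmono
  have hk0 : (k:ℝ) ≠ 0 := by positivity
  have hkpos : (0:ℝ) < k := by positivity
  have hL : (0:ℝ) < lmax - lmin := sub_pos.mpr hl
  set c : ℝ := (lmax - lmin) / k with hc
  -- equal boundaries facts
  have he0 : equalBoundaries k lmin lmax 0 = lmin := by
    simp [equalBoundaries]
  have hek : equalBoundaries k lmin lmax k = lmax := by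
    simp only [equalBoundaries]
    field_simp
    ring
  have hed : ∀ i, equalBoundaries k lmin lmax (i+1) - equalBoundaries k lmin lmax i = c := by
    intro i
    simp only [equalBoundaries, hc]
    push_cast
    field_simp
    ring
  have hSeq : ∑ i ∈ Finset.range k, (equalBoundaries k lmin lmax (i+1)
      - equalBoundaries k lmin lmax i)^2 = (k:ℝ) * c^2 := by
    simp_rw [hed]
    rw [Finset.sum_const, Finset.card_range, nsmul_eq_mul]
  have hsum : ∑ i ∈ Finset.range k, (l (i+1) - l i) = lmax - lmin := by
    rw [Finset.sum_range_sub l, h0, hkl]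
  set S : ℝ := ∑ i ∈ Finset.range k, (l (i+1) - l i)^2 with hS
  have hkey : ∑ i ∈ Finset.range k, ((l (i+1) - l i) - c)^2 = S - (k:ℝ) * c^2 := by
    have hterm : ∀ i ∈ Finset.range k,
        ((l (i+1) - l i) - c)^2
          = (l (i+1) - l i)^2 - (2*c) * (l (i+1) - l i) + c^2 := by
      intro i _; ring
    rw [Finset.sum_congr rfl hterm, Finset.sum_add_distrib, Finset.sum_sub_distrib,
      ← Finset.mul_sum, hsum, Finset.sum_const, Finset.card_range, nsmul_eq_mul]
    have : (k:ℝ) * c = lmax - lmin := by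
      rw [hc]; field_simp
    nlinarith [this]
  have hdiff : 0 ≤ S - (k:ℝ) * c^2 := by
    rw [← hkey]
    exact Finset.sum_nonneg fun i _ => sq_nonneg _
  have h1 := bst_key B k lmin lmax hl l h0 hkl
  have h2 := bst_key B k lmin lmax hl (equalBoundaries k lmin lmax) he0 hek
  rw [hSeq] at h2
  have hB1 : (1:ℝ) ≤ (B:ℝ) - 1 := by
    have : (2:ℝ) ≤ (B:ℝ) := by exact_mod_cast hB
    linarith
  have hpos : (0:ℝ) < 2 * ((B:ℝ)+1) * (lmax - lmin) := by
    have : (0:ℝ) < (B:ℝ) + 1 := by positivity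
    nlinarith
  have hmul : 2 * ((B:ℝ)+1) * (lmax - lmin) *
      (binServiceTime B k lmin lmax l
        - binServiceTime B k lmin lmax (equalBoundaries k lmin lmax))
      = ((B:ℝ)-1) * (S - (k:ℝ) * c^2) := by
    rw [mul_sub, h1, h2]; ring
  constructor
  · have h3 : 0 ≤ 2 * ((B:ℝ)+1) * (lmax - lmin) *
        (binServiceTime B k lmin lmax l
          - binServiceTime B k lmin lmax (equalBoundaries k lmin lmax)) := by
      rw [hmul]
      exact mul_nonneg (by linarith) hdiff
    nlinarith [h3, hpos]
  · intro heq
    have hS0 : S = (k:ℝ) * c^2 := by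
      have hz0 : ((B:ℝ)-1) * (S - (k:ℝ) * c^2) = 0 := by
        rw [← hmul, heq]; ring
      rcases mul_eq_zero.mp hz0 with h | h
      · linarith
      · linarith
    have hz : ∑ i ∈ Finset.range k, ((l (i+1) - l i) - c)^2 = 0 := by
      rw [hkey, hS0]; ring
    have hall : ∀ i ∈ Finset.range k, ((l (i+1) - l i) - c)^2 = 0 :=
      (Finset.sum_eq_zero_iff_of_nonneg fun i _ => sq_nonneg _).mp hz
    have hd : ∀ i, i < k → l (i+1) = l i + c := by
      intro i hi
      have := hall i (Finset.mem_range.mpr hi)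
      have := sq_eq_zero_iff.mp this
      linarith
    intro i hi
    induction i with
    | zero => rw [h0, he0]
    | succ n ih =>
      have hn : n < k := hi
      have hln : l n = equalBoundaries k lmin lmax n := ih (le_of_lt hn)
      rw [hd n hn, hln]
      simp only [equalBoundaries, hc]
      push_cast
      field_simp
      ring
end

section
/- Let B ≥ 2 and k ≥ 2 be integers and let l_min < l_max be real numbers. Define f_k on (l_1, …, l_{k−1}) ∈ ℝ^{k−1} by f_k(l_1, …, l_{k−1}) = Σ_{i=1}^{k} ((l_i − l_{i−1})/(l_max − l_min)) · ((B/(B+1)) l_i + (1/(B+1)) l_{i−1}), with l_0 = l_min and l_k = l_max. Then the Hessian of f_k at every point is the constant (k−1)×(k−1) tridiagonal matrix c · T, where c = (B−1)/((B+1)(l_max − l_min)) and T has entries T_{ii} = 2, T_{i,i+1} = T_{i+1,i} = −1 and 0 otherwise; its determinant equals k · c^{k−1} > 0, the matrix is positive definite, and hence f_k is strictly convex on ℝ^{k−1}. -/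
open Finset

/-- Extend a vector `x = (l_1, …, l_{k-1})` of free boundaries to the full boundary
sequence with `l_0 = lmin` and `l_k = lmax`. -/
def extBoundaries (k : ℕ) (lmin lmax : ℝ) (x : Fin (k - 1) → ℝ) : ℕ → ℝ := fun i =>
  if h : 1 ≤ i ∧ i ≤ k - 1 then x ⟨i - 1, by omega⟩ else if i = 0 then lmin else lmax

/-- `f_k` as a function of the free boundaries `(l_1, …, l_{k-1}) ∈ ℝ^{k-1}`. -/
noncomputable def fkFree (B k : ℕ) (lmin lmax : ℝ) (x : Fin (k - 1) → ℝ) : ℝ :=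
  binServiceTime B k lmin lmax (extBoundaries k lmin lmax x)

/-- The `(k−1)×(k−1)` tridiagonal matrix with `2` on the diagonal and `−1` on the two
adjacent diagonals. -/
def tridiagT (k : ℕ) : Matrix (Fin (k - 1)) (Fin (k - 1)) ℝ := fun i j =>
  if i = j then 2 else if (i : ℕ) + 1 = (j : ℕ) ∨ (j : ℕ) + 1 = (i : ℕ) then -1 else 0

namespace MUH

/-- the coordinate-projection CLM corresponding to boundary index `j`. -/
noncomputable def P (k : ℕ) (j : ℕ) : (Fin (k - 1) → ℝ) →L[ℝ] ℝ :=
  if h : 1 ≤ j ∧ j ≤ k - 1 then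
    ContinuousLinearMap.proj (⟨j - 1, by omega⟩ : Fin (k - 1)) else 0

lemma hE (k : ℕ) (lmin lmax : ℝ) (x : Fin (k - 1) → ℝ) (j : ℕ) :
    HasFDerivAt (fun y : Fin (k - 1) → ℝ => extBoundaries k lmin lmax y j) (P k j) x := by
  unfold extBoundaries P
  by_cases h : 1 ≤ j ∧ j ≤ k - 1
  · simp only [dif_pos h]
    exact hasFDerivAt_apply _ x
  · simp only [dif_neg h]
    exact hasFDerivAt_const _ x

lemma P_single (k : ℕ) (j : ℕ) (p : Fin (k - 1)) :
    P k j (Pi.single p 1) = if j = (p : ℕ) + 1 then 1 else 0 := by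
  have hp : (p : ℕ) < k - 1 := p.isLt
  unfold P
  by_cases h : 1 ≤ j ∧ j ≤ k - 1
  · simp only [dif_pos h, ContinuousLinearMap.proj_apply, Pi.single_apply]
    by_cases hj : j = (p : ℕ) + 1
    · have hfin : (⟨j - 1, by omega⟩ : Fin (k - 1)) = p := by
        apply Fin.ext
        show j - 1 = (p : ℕ)
        omega
      rw [if_pos hj, if_pos hfin]
    · rw [if_neg hj, if_neg]
      intro hcon
      apply hj
      have := Fin.ext_iff.mp hcon
      simp at this
      omega
  · simp only [dif_neg h, ContinuousLinearMap.zero_apply]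
    rw [if_neg]
    omega

end MUH

namespace MUH

/-- explicit first directional derivative of `fkFree` in direction `Pi.single p 1`. -/
noncomputable def g (B k : ℕ) (lmin lmax : ℝ) (p : Fin (k - 1)) (x : Fin (k - 1) → ℝ) : ℝ :=
  ((extBoundaries k lmin lmax x ((p : ℕ) + 1) - extBoundaries k lmin lmax x (p : ℕ)) *
      (lmax - lmin)⁻¹) * ((B : ℝ) / ((B : ℝ) + 1))
  + ((B : ℝ) / ((B : ℝ) + 1) * extBoundaries k lmin lmax x ((p : ℕ) + 1)
      + 1 / ((B : ℝ) + 1) * extBoundaries k lmin lmax x (p : ℕ)) * (lmax - lmin)⁻¹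
  + (((extBoundaries k lmin lmax x ((p : ℕ) + 2) - extBoundaries k lmin lmax x ((p : ℕ) + 1)) *
      (lmax - lmin)⁻¹) * (1 / ((B : ℝ) + 1))
  - ((B : ℝ) / ((B : ℝ) + 1) * extBoundaries k lmin lmax x ((p : ℕ) + 2)
      + 1 / ((B : ℝ) + 1) * extBoundaries k lmin lmax x ((p : ℕ) + 1)) * (lmax - lmin)⁻¹)

lemma hasFDerivAt_fkFree (B k : ℕ) (lmin lmax : ℝ) (x : Fin (k - 1) → ℝ) :
    HasFDerivAt (fkFree B k lmin lmax)
      (∑ i ∈ Finset.range k,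
        (((extBoundaries k lmin lmax x (i + 1) - extBoundaries k lmin lmax x i) * (lmax - lmin)⁻¹) •
            (((B : ℝ) / ((B : ℝ) + 1)) • P k (i + 1) + ((1 : ℝ) / ((B : ℝ) + 1)) • P k i)
          + ((B : ℝ) / ((B : ℝ) + 1) * extBoundaries k lmin lmax x (i + 1)
              + 1 / ((B : ℝ) + 1) * extBoundaries k lmin lmax x i) •
            ((lmax - lmin)⁻¹ • (P k (i + 1) - P k i)))) x := by
  unfold fkFree binServiceTime
  simp only [div_eq_mul_inv]
  apply HasFDerivAt.fun_sum
  intro i _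
  have h1 : HasFDerivAt
      (fun y : Fin (k - 1) → ℝ =>
        (extBoundaries k lmin lmax y (i + 1) - extBoundaries k lmin lmax y i) * (lmax - lmin)⁻¹)
      ((lmax - lmin)⁻¹ • (P k (i + 1) - P k i)) x :=
    ((hE k lmin lmax x (i + 1)).sub (hE k lmin lmax x i)).mul_const _
  have h2 : HasFDerivAt
      (fun y : Fin (k - 1) → ℝ =>
        (B : ℝ) * ((B : ℝ) + 1)⁻¹ * extBoundaries k lmin lmax y (i + 1)
          + 1 * ((B : ℝ) + 1)⁻¹ * extBoundaries k lmin lmax y i)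
      (((B : ℝ) * ((B : ℝ) + 1)⁻¹) • P k (i + 1) + (1 * ((B : ℝ) + 1)⁻¹) • P k i) x :=
    ((hE k lmin lmax x (i + 1)).const_mul _).add ((hE k lmin lmax x i).const_mul _)
  have := h1.mul h2
  exact this

end MUH
namespace MUH

lemma fderiv_fkFree (B k : ℕ) (lmin lmax : ℝ) (x : Fin (k - 1) → ℝ) (p : Fin (k - 1)) :
    fderiv ℝ (fkFree B k lmin lmax) x (Pi.single p 1) = g B k lmin lmax p x := by
  have hp : (p : ℕ) < k - 1 := p.isLt
  rw [(hasFDerivAt_fkFree B k lmin lmax x).fderiv]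
  rw [ContinuousLinearMap.sum_apply]
  simp only [ContinuousLinearMap.add_apply, ContinuousLinearMap.smul_apply,
    ContinuousLinearMap.sub_apply, P_single, smul_eq_mul]
  have key : ∀ i ∈ Finset.range k,
      ((extBoundaries k lmin lmax x (i + 1) - extBoundaries k lmin lmax x i) * (lmax - lmin)⁻¹) *
          ((B : ℝ) / ((B : ℝ) + 1) * (if i + 1 = (p : ℕ) + 1 then 1 else 0)
            + (1 : ℝ) / ((B : ℝ) + 1) * (if i = (p : ℕ) + 1 then 1 else 0))
        + ((B : ℝ) / ((B : ℝ) + 1) * extBoundaries k lmin lmax x (i + 1)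
            + 1 / ((B : ℝ) + 1) * extBoundaries k lmin lmax x i) *
          ((lmax - lmin)⁻¹ *
            ((if i + 1 = (p : ℕ) + 1 then 1 else 0) - (if i = (p : ℕ) + 1 then 1 else 0)))
      = (if i = (p : ℕ) then
          ((extBoundaries k lmin lmax x (i + 1) - extBoundaries k lmin lmax x i) * (lmax - lmin)⁻¹)
            * ((B : ℝ) / ((B : ℝ) + 1))
          + ((B : ℝ) / ((B : ℝ) + 1) * extBoundaries k lmin lmax x (i + 1)
              + 1 / ((B : ℝ) + 1) * extBoundaries k lmin lmax x i) * (lmax - lmin)⁻¹ else 0)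
        + (if i = (p : ℕ) + 1 then
          ((extBoundaries k lmin lmax x (i + 1) - extBoundaries k lmin lmax x i) * (lmax - lmin)⁻¹)
            * (1 / ((B : ℝ) + 1))
          - ((B : ℝ) / ((B : ℝ) + 1) * extBoundaries k lmin lmax x (i + 1)
              + 1 / ((B : ℝ) + 1) * extBoundaries k lmin lmax x i) * (lmax - lmin)⁻¹ else 0) := by
    intro i _
    by_cases h1 : i = (p : ℕ)
    · have h2 : ¬ (i = (p : ℕ) + 1) := by omega
      have h3 : i + 1 = (p : ℕ) + 1 := by omega
      simp only [if_pos h1, if_neg h2, if_pos h3]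
      ring
    · by_cases h2 : i = (p : ℕ) + 1
      · have h3 : ¬ (i + 1 = (p : ℕ) + 1) := by omega
        simp only [if_pos h2, if_neg h1, if_neg h3]
        ring
      · have h3 : ¬ (i + 1 = (p : ℕ) + 1) := by omega
        simp only [if_neg h1, if_neg h2, if_neg h3]
        ring
  rw [Finset.sum_congr rfl key, Finset.sum_add_distrib, Finset.sum_ite_eq' (Finset.range k),
    Finset.sum_ite_eq' (Finset.range k)]
  rw [if_pos (Finset.mem_range.mpr (by omega)), if_pos (Finset.mem_range.mpr (by omega))]
  unfold g
  ring

end MUH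
namespace MUH

lemma fderiv_g (B k : ℕ) (hB : 2 ≤ B) (hk : 2 ≤ k) (lmin lmax : ℝ) (hl : lmin < lmax)
    (c : ℝ) (hc : c = ((B : ℝ) - 1) / (((B : ℝ) + 1) * (lmax - lmin)))
    (x : Fin (k - 1) → ℝ) (p q : Fin (k - 1)) :
    fderiv ℝ (g B k lmin lmax p) x (Pi.single q 1) = c * tridiagT k p q := by
  have hB1 : ((B : ℝ) + 1) ≠ 0 := by positivity
  have hD : lmax - lmin ≠ 0 := by linarith
  have hg' : HasFDerivAt (g B k lmin lmax p)
      ((((B : ℝ) / ((B : ℝ) + 1)) • ((lmax - lmin)⁻¹ • (P k ((p : ℕ) + 1) - P k (p : ℕ)))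
        + (lmax - lmin)⁻¹ • (((B : ℝ) / ((B : ℝ) + 1)) • P k ((p : ℕ) + 1)
            + (1 / ((B : ℝ) + 1)) • P k (p : ℕ)))
        + ((1 / ((B : ℝ) + 1)) • ((lmax - lmin)⁻¹ • (P k ((p : ℕ) + 2) - P k ((p : ℕ) + 1)))
          - (lmax - lmin)⁻¹ • (((B : ℝ) / ((B : ℝ) + 1)) • P k ((p : ℕ) + 2)
              + (1 / ((B : ℝ) + 1)) • P k ((p : ℕ) + 1)))) x := by
    unfold g
    have d1 := (((hE k lmin lmax x ((p : ℕ) + 1)).sub (hE k lmin lmax x (p : ℕ))).mul_const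
        ((lmax - lmin)⁻¹)).mul_const ((B : ℝ) / ((B : ℝ) + 1))
    have d2 := ((((hE k lmin lmax x ((p : ℕ) + 1)).const_mul ((B : ℝ) / ((B : ℝ) + 1))).add
        ((hE k lmin lmax x (p : ℕ)).const_mul (1 / ((B : ℝ) + 1)))).mul_const ((lmax - lmin)⁻¹))
    have d3 := (((hE k lmin lmax x ((p : ℕ) + 2)).sub (hE k lmin lmax x ((p : ℕ) + 1))).mul_const
        ((lmax - lmin)⁻¹)).mul_const (1 / ((B : ℝ) + 1))
    have d4 := ((((hE k lmin lmax x ((p : ℕ) + 2)).const_mul ((B : ℝ) / ((B : ℝ) + 1))).add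
        ((hE k lmin lmax x ((p : ℕ) + 1)).const_mul (1 / ((B : ℝ) + 1)))).mul_const ((lmax - lmin)⁻¹))
    exact (d1.add d2).add (d3.sub d4)
  rw [hg'.fderiv]
  simp only [ContinuousLinearMap.add_apply, ContinuousLinearMap.sub_apply,
    ContinuousLinearMap.smul_apply, P_single, smul_eq_mul]
  unfold tridiagT
  by_cases hpq : p = q
  · subst hpq
    rw [if_pos rfl, if_pos rfl, if_neg (by omega : ¬((p : ℕ) = (p : ℕ) + 1)),
      if_neg (by omega : ¬((p : ℕ) + 2 = (p : ℕ) + 1))]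
    rw [hc]
    field_simp
    ring
  · rw [if_neg hpq]
    have hpq' : (p : ℕ) ≠ (q : ℕ) := fun h => hpq (Fin.ext h)
    by_cases h1 : (p : ℕ) = (q : ℕ) + 1
    · rw [if_pos (Or.inr h1.symm), if_pos h1, if_neg (by omega : ¬((p : ℕ) + 1 = (q : ℕ) + 1)),
        if_neg (by omega : ¬((p : ℕ) + 2 = (q : ℕ) + 1))]
      rw [hc]
      field_simp
      ring
    · by_cases h2 : (q : ℕ) = (p : ℕ) + 1
      · rw [if_pos (Or.inl h2.symm), if_pos (by omega : (p : ℕ) + 2 = (q : ℕ) + 1),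
          if_neg (by omega : ¬((p : ℕ) + 1 = (q : ℕ) + 1)), if_neg h1]
        rw [hc]
        field_simp
        ring
      · rw [if_neg (show ¬(((p : ℕ) + 1 = (q : ℕ)) ∨ ((q : ℕ) + 1 = (p : ℕ))) by omega),
          if_neg (by omega : ¬((p : ℕ) + 1 = (q : ℕ) + 1)), if_neg h1,
          if_neg (by omega : ¬((p : ℕ) + 2 = (q : ℕ) + 1))]
        ring

end MUH
namespace MUH

def Tm (n : ℕ) : Matrix (Fin n) (Fin n) ℝ := fun i j =>
  if i = j then 2 else if (i : ℕ) + 1 = (j : ℕ) ∨ (j : ℕ) + 1 = (i : ℕ) then -1 else 0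

lemma Tm_apply (n : ℕ) (i j : Fin n) :
    Tm n i j = if (i : ℕ) = (j : ℕ) then 2
      else if (i : ℕ) + 1 = (j : ℕ) ∨ (j : ℕ) + 1 = (i : ℕ) then -1 else 0 := by
  simp [Tm, Fin.ext_iff]

lemma val_succAbove {m : ℕ} (p : Fin (m + 1)) (j : Fin m) :
    ((p.succAbove j : Fin (m + 1)) : ℕ) = if (j : ℕ) < (p : ℕ) then (j : ℕ) else (j : ℕ) + 1 := by
  rw [Fin.succAbove]
  split_ifs with h1 h2 h2
  · rfl
  · exact absurd (by exact_mod_cast h1) h2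
  · exact absurd (by exact_mod_cast h2) h1
  · rfl

lemma det_Tm : ∀ n : ℕ, (Tm n).det = (n : ℝ) + 1 := by
  intro n
  induction n using Nat.twoStepInduction with
  | zero => simp [Matrix.det_fin_zero]
  | one => simp [Matrix.det_fin_one, Tm]; norm_num
  | more n ih1 ih2 =>
    rw [Matrix.det_succ_row_zero, Fin.sum_univ_succ, Fin.sum_univ_succ]
    have hz : ∀ j : Fin n, Tm (n + 2) 0 (Fin.succ (Fin.succ j)) = 0 := by
      intro j
      rw [Tm_apply]
      rw [if_neg (by simp), if_neg (by simp [Fin.val_succ])]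
    have hsum0 : (∑ j : Fin n, (-1 : ℝ) ^ ((Fin.succ (Fin.succ j) : Fin (n + 2)) : ℕ) *
        Tm (n + 2) 0 (Fin.succ (Fin.succ j)) *
        ((Tm (n + 2)).submatrix Fin.succ (Fin.succ (Fin.succ j)).succAbove).det) = 0 := by
      apply Finset.sum_eq_zero
      intro j _
      rw [hz j]; ring
    rw [hsum0]
    have hM0 : (Tm (n + 2)).submatrix Fin.succ ((0 : Fin (n + 2)).succAbove) = Tm (n + 1) := by
      ext i j
      rw [Fin.succAbove_zero, Matrix.submatrix_apply, Tm_apply, Tm_apply, Fin.val_succ,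
        Fin.val_succ]
      split_ifs <;> first | rfl | omega
    have hM1det : ((Tm (n + 2)).submatrix Fin.succ ((Fin.succ 0 : Fin (n + 2)).succAbove)).det
        = -(Tm n).det := by
      set M1 := (Tm (n + 2)).submatrix Fin.succ ((Fin.succ 0 : Fin (n + 2)).succAbove) with hM1
      rw [Matrix.det_succ_column_zero, Fin.sum_univ_succ]
      have hcol : ∀ i : Fin n, M1 (Fin.succ i) 0 = 0 := by
        intro i
        rw [hM1, Matrix.submatrix_apply, Tm_apply]
        have h1 : (((Fin.succ 0 : Fin (n + 2)).succAbove 0 : Fin (n + 2)) : ℕ) = 0 := by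
          rw [val_succAbove]; simp
        rw [if_neg (by simp [h1, Fin.val_succ]), if_neg (by simp [h1, Fin.val_succ])]
      have hz2 : (∑ i : Fin n, (-1 : ℝ) ^ ((Fin.succ i : Fin (n + 1)) : ℕ) * M1 (Fin.succ i) 0 *
          (M1.submatrix (Fin.succ i).succAbove Fin.succ).det) = 0 := by
        apply Finset.sum_eq_zero
        intro i _
        rw [hcol i]; ring
      rw [hz2]
      have hM100 : M1 0 0 = -1 := by
        rw [hM1, Matrix.submatrix_apply, Tm_apply]
        have h1 : (((Fin.succ 0 : Fin (n + 2)).succAbove 0 : Fin (n + 2)) : ℕ) = 0 := by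
          rw [val_succAbove]; simp
        rw [if_neg (by simp [h1, Fin.val_succ]), if_pos (by simp [h1, Fin.val_succ])]
      have hM2 : M1.submatrix ((0 : Fin (n + 1)).succAbove) Fin.succ = Tm n := by
        ext i j
        rw [Fin.succAbove_zero, hM1, Matrix.submatrix_apply, Matrix.submatrix_apply, Tm_apply,
          Tm_apply]
        have h2 : (((Fin.succ 0 : Fin (n + 2)).succAbove (Fin.succ j) : Fin (n + 2)) : ℕ)
            = (j : ℕ) + 2 := by
          rw [val_succAbove]
          simp [Fin.val_succ]
        rw [h2]
        simp only [Fin.val_succ]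
        split_ifs <;> first | rfl | omega
      rw [hM100, hM2]
      simp
    have h00 : Tm (n + 2) 0 0 = 2 := by rw [Tm_apply]; simp
    have h01 : Tm (n + 2) 0 (Fin.succ 0) = -1 := by
      rw [Tm_apply]
      rw [if_neg (by simp), if_pos (by simp)]
    rw [hM0, hM1det, h00, h01, ih1, ih2]
    simp only [Fin.val_zero, Fin.val_succ, pow_zero, pow_one, zero_add]
    push_cast
    ring
end MUH
namespace MUH

def padX (n : ℕ) (x : Fin n → ℝ) : ℕ → ℝ := fun j => if h : j < n then x ⟨j, h⟩ else 0

lemma padX_coe (n : ℕ) (x : Fin n → ℝ) (i : Fin n) : padX n x (i : ℕ) = x i := by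
  simp [padX, i.isLt]

lemma sum_sq_identity (m : ℕ) (X : ℕ → ℝ) :
    2 * (∑ j ∈ Finset.range (m + 1), X j ^ 2) - 2 * (∑ j ∈ Finset.range m, X j * X (j + 1))
      = X 0 ^ 2 + X m ^ 2 + ∑ j ∈ Finset.range m, (X j - X (j + 1)) ^ 2 := by
  have h1 : ∑ j ∈ Finset.range m, (X j - X (j + 1)) ^ 2
      = ∑ j ∈ Finset.range m, X j ^ 2 - 2 * (∑ j ∈ Finset.range m, X j * X (j + 1))
        + ∑ j ∈ Finset.range m, X (j + 1) ^ 2 := by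
    have hterm : ∀ j ∈ Finset.range m, (X j - X (j + 1)) ^ 2
        = X j ^ 2 - 2 * (X j * X (j + 1)) + X (j + 1) ^ 2 := fun j _ => by ring
    rw [Finset.sum_congr rfl hterm, Finset.sum_add_distrib, Finset.sum_sub_distrib,
      ← Finset.mul_sum]
  have h2 : ∑ j ∈ Finset.range (m + 1), X j ^ 2
      = ∑ j ∈ Finset.range m, X j ^ 2 + X m ^ 2 := Finset.sum_range_succ _ m
  have h3 : ∑ j ∈ Finset.range (m + 1), X j ^ 2
      = ∑ j ∈ Finset.range m, X (j + 1) ^ 2 + X 0 ^ 2 := Finset.sum_range_succ' _ m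
  linarith

lemma pos_aux (m : ℕ) (X : ℕ → ℝ) (hne : ∃ j, j ≤ m ∧ X j ≠ 0) :
    0 < X 0 ^ 2 + X m ^ 2 + ∑ j ∈ Finset.range m, (X j - X (j + 1)) ^ 2 := by
  by_contra hcon
  push_neg at hcon
  have hsum : 0 ≤ ∑ j ∈ Finset.range m, (X j - X (j + 1)) ^ 2 :=
    Finset.sum_nonneg fun _ _ => sq_nonneg _
  have h0 : X 0 = 0 := by
    nlinarith [sq_nonneg (X 0), sq_nonneg (X m)]
  have hterm : ∀ j ∈ Finset.range m, (X j - X (j + 1)) ^ 2 = 0 := by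
    rw [← Finset.sum_eq_zero_iff_of_nonneg fun _ _ => sq_nonneg _]
    nlinarith [sq_nonneg (X 0), sq_nonneg (X m)]
  have hall : ∀ j, j ≤ m → X j = 0 := by
    intro j
    induction j with
    | zero => intro _; exact h0
    | succ j ih =>
      intro hj
      have hjm : j ∈ Finset.range m := Finset.mem_range.mpr (by omega)
      have := hterm j hjm
      have hdiff : X j - X (j + 1) = 0 := by
        have := sq_eq_zero_iff.mp this
        exact this
      have := ih (by omega)
      linarith
  obtain ⟨j, hj, hXj⟩ := hne
  exact hXj (hall j hj)

lemma mulVec_Tm (n : ℕ) (x : Fin n → ℝ) (i : Fin n) :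
    (Tm n).mulVec x i = 2 * padX n x (i : ℕ) - padX n x ((i : ℕ) + 1)
      - (if 1 ≤ (i : ℕ) then padX n x ((i : ℕ) - 1) else 0) := by
  have hsplit : ∀ j : Fin n, Tm n i j * x j =
      (if (j : ℕ) = (i : ℕ) then 2 * padX n x (j : ℕ) else 0)
        - (if (j : ℕ) = (i : ℕ) + 1 then padX n x (j : ℕ) else 0)
        - (if ((j : ℕ) = (i : ℕ) - 1 ∧ 1 ≤ (i : ℕ)) then padX n x (j : ℕ) else 0) := by
    intro j
    rw [← padX_coe n x j, Tm_apply]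
    split_ifs
    all_goals try (exfalso; omega)
    all_goals ring_nf
  have hconv : (Tm n).mulVec x i = ∑ j : Fin n, Tm n i j * x j := rfl
  rw [hconv, Finset.sum_congr rfl fun j _ => hsplit j]
  rw [Finset.sum_sub_distrib, Finset.sum_sub_distrib]
  have e1 : (∑ j : Fin n, if (j : ℕ) = (i : ℕ) then 2 * padX n x (j : ℕ) else 0)
      = 2 * padX n x (i : ℕ) := by
    rw [Fin.sum_univ_eq_sum_range (fun jj => if jj = (i : ℕ) then 2 * padX n x jj else 0) n,
      Finset.sum_ite_eq' (Finset.range n)]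
    rw [if_pos (Finset.mem_range.mpr i.isLt)]
  have e2 : (∑ j : Fin n, if (j : ℕ) = (i : ℕ) + 1 then padX n x (j : ℕ) else 0)
      = padX n x ((i : ℕ) + 1) := by
    rw [Fin.sum_univ_eq_sum_range (fun jj => if jj = (i : ℕ) + 1 then padX n x jj else 0) n,
      Finset.sum_ite_eq' (Finset.range n)]
    by_cases h : (i : ℕ) + 1 < n
    · rw [if_pos (Finset.mem_range.mpr h)]
    · rw [if_neg (by simpa using h)]
      simp [padX, h]
  have e3 : (∑ j : Fin n, if ((j : ℕ) = (i : ℕ) - 1 ∧ 1 ≤ (i : ℕ)) then padX n x (j : ℕ) else 0)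
      = if 1 ≤ (i : ℕ) then padX n x ((i : ℕ) - 1) else 0 := by
    by_cases hi : 1 ≤ (i : ℕ)
    · rw [if_pos hi]
      have : ∀ j : Fin n, (if ((j : ℕ) = (i : ℕ) - 1 ∧ 1 ≤ (i : ℕ)) then padX n x (j : ℕ) else 0)
          = (if (j : ℕ) = (i : ℕ) - 1 then padX n x (j : ℕ) else 0) := by
        intro j
        by_cases hj : (j : ℕ) = (i : ℕ) - 1
        · rw [if_pos ⟨hj, hi⟩, if_pos hj]
        · rw [if_neg (fun hc => hj hc.1), if_neg hj]
      rw [Finset.sum_congr rfl fun j _ => this j,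
        Fin.sum_univ_eq_sum_range (fun jj => if jj = (i : ℕ) - 1 then padX n x jj else 0) n,
        Finset.sum_ite_eq' (Finset.range n)]
      rw [if_pos (Finset.mem_range.mpr (by have := i.isLt; omega))]
    · rw [if_neg hi]
      apply Finset.sum_eq_zero
      intro j _
      rw [if_neg (fun hc => hi hc.2)]
  rw [e1, e2, e3]

lemma quad_Tm (m : ℕ) (x : Fin (m + 1) → ℝ) :
    dotProduct x ((Tm (m + 1)).mulVec x)
      = padX (m + 1) x 0 ^ 2 + padX (m + 1) x m ^ 2
        + ∑ j ∈ Finset.range m, (padX (m + 1) x j - padX (m + 1) x (j + 1)) ^ 2 := by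
  set X := padX (m + 1) x with hX
  have hterm : ∀ i : Fin (m + 1), x i * (Tm (m + 1)).mulVec x i
      = 2 * X (i : ℕ) ^ 2 - X (i : ℕ) * X ((i : ℕ) + 1)
        - X (i : ℕ) * (if 1 ≤ (i : ℕ) then X ((i : ℕ) - 1) else 0) := by
    intro i
    rw [mulVec_Tm, ← padX_coe (m + 1) x i, ← hX]
    ring
  have hdot : dotProduct x ((Tm (m + 1)).mulVec x)
      = ∑ i : Fin (m + 1), x i * (Tm (m + 1)).mulVec x i := rfl
  rw [hdot, Finset.sum_congr rfl fun i _ => hterm i,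
    Fin.sum_univ_eq_sum_range (fun ii => 2 * X ii ^ 2 - X ii * X (ii + 1)
      - X ii * (if 1 ≤ ii then X (ii - 1) else 0)) (m + 1)]
  rw [Finset.sum_sub_distrib, Finset.sum_sub_distrib]
  have e1 : ∑ i ∈ Finset.range (m + 1), 2 * X i ^ 2
      = 2 * ∑ i ∈ Finset.range (m + 1), X i ^ 2 := by rw [Finset.mul_sum]
  have e2 : ∑ i ∈ Finset.range (m + 1), X i * X (i + 1)
      = ∑ i ∈ Finset.range m, X i * X (i + 1) := by
    rw [Finset.sum_range_succ]
    have : X (m + 1) = 0 := by simp [hX, padX]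
    rw [this]
    ring
  have e3 : ∑ i ∈ Finset.range (m + 1), X i * (if 1 ≤ i then X (i - 1) else 0)
      = ∑ i ∈ Finset.range m, X i * X (i + 1) := by
    rw [Finset.sum_range_succ']
    have hlast : X 0 * (if (1 : ℕ) ≤ 0 then X (0 - 1) else 0) = 0 := by
      rw [if_neg (by omega)]
      ring
    rw [hlast, add_zero]
    apply Finset.sum_congr rfl
    intro i _
    rw [if_pos (by omega : (1 : ℕ) ≤ i + 1), Nat.add_sub_cancel]
    ring
  rw [e1, e2, e3]
  have := sum_sq_identity m X
  linarith

end MUH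
namespace MUH

lemma quad_Tm' (n : ℕ) (hn : 1 ≤ n) (x : Fin n → ℝ) :
    dotProduct x ((Tm n).mulVec x)
      = padX n x 0 ^ 2 + padX n x (n - 1) ^ 2
        + ∑ j ∈ Finset.range (n - 1), (padX n x j - padX n x (j + 1)) ^ 2 := by
  obtain ⟨m, rfl⟩ : ∃ m, n = m + 1 := ⟨n - 1, by omega⟩
  simpa using quad_Tm m x

lemma Tm_herm (n : ℕ) : (Tm n).IsHermitian := by
  show (Tm n).conjTranspose = Tm n
  ext i j
  rw [Matrix.conjTranspose_apply, Tm_apply, Tm_apply]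
  simp only [star_trivial]
  split_ifs <;> first | rfl | omega

lemma posdef_smul_Tm (n : ℕ) (hn : 1 ≤ n) (c : ℝ) (hc : 0 < c) :
    (c • Tm n).PosDef := by
  rw [Matrix.posDef_iff_dotProduct_mulVec]
  constructor
  · show (c • Tm n).conjTranspose = c • Tm n
    have h := Tm_herm n
    rw [Matrix.conjTranspose_smul]
    rw [Matrix.IsHermitian] at h
    rw [h, star_trivial]
  · intro v hv
    have hstar : star v = v := funext fun i => star_trivial _
    rw [hstar, Matrix.smul_mulVec, dotProduct_smul, smul_eq_mul]
    apply mul_pos hc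
    rw [quad_Tm' n hn v]
    apply pos_aux
    obtain ⟨p, hp⟩ := Function.ne_iff.mp hv
    exact ⟨(p : ℕ), by omega, by rw [padX_coe]; simpa using hp⟩

lemma ext_top (k : ℕ) (lmin lmax : ℝ) (x : Fin (k - 1) → ℝ) (p : Fin (k - 1)) :
    extBoundaries k lmin lmax x ((p : ℕ) + 1) = x p := by
  have hp : (p : ℕ) < k - 1 := p.isLt
  unfold extBoundaries
  rw [dif_pos ⟨by omega, by omega⟩]
  have hfin : (⟨(p : ℕ) + 1 - 1, by omega⟩ : Fin (k - 1)) = p := by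
    apply Fin.ext
    simp
  rw [hfin]

lemma ext_combo (k : ℕ) (lmin lmax : ℝ) (x y : Fin (k - 1) → ℝ) (a b : ℝ) (hab : a + b = 1)
    (j : ℕ) :
    extBoundaries k lmin lmax (a • x + b • y) j
      = a * extBoundaries k lmin lmax x j + b * extBoundaries k lmin lmax y j := by
  unfold extBoundaries
  split_ifs with h h2
  · simp [smul_eq_mul]
  · rw [← add_mul, hab, one_mul]
  · rw [← add_mul, hab, one_mul]

lemma convexity_identity (B k : ℕ) (lmin lmax : ℝ) (x y : Fin (k - 1) → ℝ) (a b : ℝ)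
    (hab : a + b = 1) :
    fkFree B k lmin lmax (a • x + b • y)
      = a * fkFree B k lmin lmax x + b * fkFree B k lmin lmax y
        - a * b * ∑ i ∈ Finset.range k,
            (((extBoundaries k lmin lmax x (i + 1) - extBoundaries k lmin lmax y (i + 1))
                - (extBoundaries k lmin lmax x i - extBoundaries k lmin lmax y i))
                / (lmax - lmin)) *
              ((B : ℝ) / ((B : ℝ) + 1) *
                  (extBoundaries k lmin lmax x (i + 1) - extBoundaries k lmin lmax y (i + 1))
                + 1 / ((B : ℝ) + 1) *
                  (extBoundaries k lmin lmax x i - extBoundaries k lmin lmax y i)) := by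
  unfold fkFree binServiceTime
  rw [Finset.mul_sum, Finset.mul_sum, Finset.mul_sum, ← Finset.sum_add_distrib,
    ← Finset.sum_sub_distrib]
  apply Finset.sum_congr rfl
  intro i _
  rw [ext_combo k lmin lmax x y a b hab (i + 1), ext_combo k lmin lmax x y a b hab i]
  have hb : b = 1 - a := by linarith
  subst hb
  ring

lemma Q_pos (B k : ℕ) (hB : 2 ≤ B) (hk : 2 ≤ k) (lmin lmax : ℝ) (hl : lmin < lmax)
    (x y : Fin (k - 1) → ℝ) (hxy : x ≠ y) :
    0 < ∑ i ∈ Finset.range k,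
        (((extBoundaries k lmin lmax x (i + 1) - extBoundaries k lmin lmax y (i + 1))
            - (extBoundaries k lmin lmax x i - extBoundaries k lmin lmax y i))
            / (lmax - lmin)) *
          ((B : ℝ) / ((B : ℝ) + 1) *
              (extBoundaries k lmin lmax x (i + 1) - extBoundaries k lmin lmax y (i + 1))
            + 1 / ((B : ℝ) + 1) *
              (extBoundaries k lmin lmax x i - extBoundaries k lmin lmax y i)) := by
  have hB1 : (0 : ℝ) < (B : ℝ) + 1 := by positivity
  have hD : (0 : ℝ) < lmax - lmin := by linarith
  set d : ℕ → ℝ := fun j => extBoundaries k lmin lmax x j - extBoundaries k lmin lmax y j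
    with hd
  have hnot0 : ¬(1 ≤ 0 ∧ 0 ≤ k - 1) := by omega
  have hnotk : ¬(1 ≤ k ∧ k ≤ k - 1) := by omega
  have hk0 : k ≠ 0 := by omega
  have hd0 : d 0 = 0 := by
    show extBoundaries k lmin lmax x 0 - extBoundaries k lmin lmax y 0 = 0
    unfold extBoundaries
    rw [dif_neg hnot0, dif_neg hnot0]
    simp
  have hdk : d k = 0 := by
    show extBoundaries k lmin lmax x k - extBoundaries k lmin lmax y k = 0
    unfold extBoundaries
    rw [dif_neg hnotk, dif_neg hnotk]
    simp [hk0]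
  have hterm : ∀ i ∈ Finset.range k,
      ((d (i + 1) - d i) / (lmax - lmin)) *
          ((B : ℝ) / ((B : ℝ) + 1) * d (i + 1) + 1 / ((B : ℝ) + 1) * d i)
        = ((B : ℝ) / ((B : ℝ) + 1) / (lmax - lmin)) * d (i + 1) ^ 2
          + ((1 / ((B : ℝ) + 1) - (B : ℝ) / ((B : ℝ) + 1)) / (lmax - lmin)) * (d i * d (i + 1))
          - (1 / ((B : ℝ) + 1) / (lmax - lmin)) * d i ^ 2 := by
    intro i _
    ring
  rw [Finset.sum_congr rfl hterm, Finset.sum_sub_distrib, Finset.sum_add_distrib,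
    ← Finset.mul_sum, ← Finset.mul_sum, ← Finset.mul_sum]
  have hshift : ∑ i ∈ Finset.range k, d (i + 1) ^ 2 = ∑ i ∈ Finset.range k, d i ^ 2 := by
    have h1 := Finset.sum_range_succ' (fun j => d j ^ 2) k
    have h2 := Finset.sum_range_succ (fun j => d j ^ 2) k
    rw [hdk] at h2
    rw [hd0] at h1
    nlinarith [h1, h2]
  rw [hshift]
  obtain ⟨m, rfl⟩ : ∃ m, k = m + 1 := ⟨k - 1, by omega⟩
  have hC : ∑ i ∈ Finset.range (m + 1), d i * d (i + 1)
      = ∑ i ∈ Finset.range m, d i * d (i + 1) := by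
    rw [Finset.sum_range_succ, hdk]
    ring
  rw [hC]
  have hid := sum_sq_identity m d
  have hpos : 0 < d 0 ^ 2 + d m ^ 2 + ∑ j ∈ Finset.range m, (d j - d (j + 1)) ^ 2 := by
    apply pos_aux
    obtain ⟨p, hp⟩ := Function.ne_iff.mp hxy
    refine ⟨(p : ℕ) + 1, by have := p.isLt; omega, ?_⟩
    show extBoundaries (m + 1) lmin lmax x ((p : ℕ) + 1)
        - extBoundaries (m + 1) lmin lmax y ((p : ℕ) + 1) ≠ 0
    rw [ext_top, ext_top]
    intro hcon
    apply hp
    linarith [sub_eq_zero.mp hcon]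
  have hS : 0 < ∑ i ∈ Finset.range (m + 1), d i ^ 2 - ∑ i ∈ Finset.range m, d i * d (i + 1) := by
    linarith
  have hcoef : 0 < ((B : ℝ) / ((B : ℝ) + 1) - 1 / ((B : ℝ) + 1)) / (lmax - lmin) := by
    apply div_pos _ hD
    rw [div_sub_div_same]
    apply div_pos _ hB1
    have : (2 : ℝ) ≤ (B : ℝ) := by exact_mod_cast hB
    linarith
  have key : ((B : ℝ) / ((B : ℝ) + 1) - 1 / ((B : ℝ) + 1)) / (lmax - lmin) *
        ((∑ i ∈ Finset.range (m + 1), d i ^ 2) - ∑ i ∈ Finset.range m, d i * d (i + 1))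
      = (B : ℝ) / ((B : ℝ) + 1) / (lmax - lmin) * ∑ i ∈ Finset.range (m + 1), d i ^ 2
        + (1 / ((B : ℝ) + 1) - (B : ℝ) / ((B : ℝ) + 1)) / (lmax - lmin) *
            ∑ i ∈ Finset.range m, d i * d (i + 1)
        - 1 / ((B : ℝ) + 1) / (lmax - lmin) * ∑ i ∈ Finset.range (m + 1), d i ^ 2 := by
    ring
  linarith [mul_pos hcoef hS, key]

end MUH

/-- the Hessian of `f_k` at every point is the constant matrix `c • T`
with `c = (B−1)/((B+1)(l_max − l_min))` and `T` the tridiagonal matrix above; its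
determinant equals `k · c^{k−1} > 0`, it is positive definite, and hence `f_k` is
strictly convex on `ℝ^{k−1}`. -/
theorem multibin_uniform_hessian (B k : ℕ) (hB : 2 ≤ B) (hk : 2 ≤ k)
    (lmin lmax : ℝ) (hl : lmin < lmax)
    (c : ℝ) (hc : c = ((B : ℝ) - 1) / (((B : ℝ) + 1) * (lmax - lmin))) :
    (∀ (x : Fin (k - 1) → ℝ) (i j : Fin (k - 1)),
        fderiv ℝ (fun y => fderiv ℝ (fkFree B k lmin lmax) y (Pi.single i 1)) x
            (Pi.single j 1) =
          c * tridiagT k i j) ∧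
      (c • tridiagT k).det = (k : ℝ) * c ^ (k - 1) ∧
      0 < (c • tridiagT k).det ∧
      (c • tridiagT k).PosDef ∧
      StrictConvexOn ℝ Set.univ (fkFree B k lmin lmax) := by
  have hB2 : (2 : ℝ) ≤ (B : ℝ) := by exact_mod_cast hB
  have hc' : 0 < c := by
    rw [hc]
    apply div_pos (by linarith)
    apply mul_pos (by linarith) (by linarith)
  have hTT : tridiagT k = MUH.Tm (k - 1) := rfl
  have hdet : (c • tridiagT k).det = (k : ℝ) * c ^ (k - 1) := by
    rw [hTT, Matrix.det_smul, MUH.det_Tm, Fintype.card_fin]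
    have hcast : (((k - 1 : ℕ)) : ℝ) = (k : ℝ) - 1 := by
      rw [Nat.cast_sub (by omega : 1 ≤ k)]
      norm_num
    rw [hcast]
    ring
  refine ⟨?_, hdet, ?_, ?_, ?_⟩
  · intro x i j
    have hfun : (fun y => fderiv ℝ (fkFree B k lmin lmax) y (Pi.single i 1))
        = MUH.g B k lmin lmax i := funext fun y => MUH.fderiv_fkFree B k lmin lmax y i
    rw [hfun]
    exact MUH.fderiv_g B k hB hk lmin lmax hl c hc x i j
  · rw [hdet]
    have hkpos : (0 : ℝ) < (k : ℝ) := by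
      have : (2 : ℝ) ≤ (k : ℝ) := by exact_mod_cast hk
      linarith
    exact mul_pos hkpos (pow_pos hc' _)
  · rw [hTT]
    exact MUH.posdef_smul_Tm (k - 1) (by omega) c hc'
  · refine ⟨convex_univ, ?_⟩
    intro x _ y _ hxy a b ha hb hab
    have hid := MUH.convexity_identity B k lmin lmax x y a b hab
    have hQ := MUH.Q_pos B k hB hk lmin lmax hl x y hxy
    rw [smul_eq_mul, smul_eq_mul, hid]
    nlinarith [mul_pos (mul_pos ha hb) hQ]
end

section
/- Let B ≥ 2 be an integer, 0 < l_min < l_max real numbers, Δ = (B/(B+1)) l_max + (1/(B+1)) l_min − (l_max + l_min)/2, Throughput_k = B / ((l_max + l_min)/2 + Δ/k), and c_max = 2B/(l_max + l_min). Then for every ε with 0 < ε < c_max and every integer k ≥ 1: Throughput_k ≥ c_max − ε if and only if k ≥ (c_max − ε) · Δ / (ε · (l_max + l_min)/2). Consequently the smallest number of bins achieving throughput c_max − ε is ⌈(c_max − ε) Δ / (ε (l_max + l_min)/2)⌉, which is O(1/ε) as ε → 0. -/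
/-- with `Δ = (B/(B+1)) l_max + (1/(B+1)) l_min − (l_max + l_min)/2`,
`Throughput_k = B / ((l_max + l_min)/2 + Δ/k)` and `c_max = 2B/(l_max + l_min)`:
for every `0 < ε < c_max` and integer `k ≥ 1`, `Throughput_k ≥ c_max − ε` iff
`k ≥ (c_max − ε) Δ / (ε (l_max + l_min)/2)`; consequently the smallest number of bins
achieving throughput `c_max − ε` is `⌈(c_max − ε) Δ / (ε (l_max + l_min)/2)⌉`, which is
`O(1/ε)` as `ε → 0`. -/
theorem multibin_min_bins_for_target_throughput (B : ℕ) (hB : 2 ≤ B) (lmin lmax : ℝ)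
    (h0 : 0 < lmin) (h : lmin < lmax)
    (Δ : ℝ) (hΔ : Δ = ((B : ℝ) / (B + 1)) * lmax + (1 / (B + 1)) * lmin - (lmax + lmin) / 2)
    (Thr : ℕ → ℝ) (cmax : ℝ)
    (hThr : ∀ k : ℕ, Thr k = (B : ℝ) / ((lmax + lmin) / 2 + Δ / k))
    (hc : cmax = 2 * (B : ℝ) / (lmax + lmin)) :
    (∀ ε : ℝ, 0 < ε → ε < cmax → ∀ k : ℕ, 1 ≤ k →
      (cmax - ε ≤ Thr k ↔ (cmax - ε) * Δ / (ε * ((lmax + lmin) / 2)) ≤ (k : ℝ))) ∧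
    (∀ ε : ℝ, 0 < ε → ε < cmax →
      IsLeast {k : ℕ | 1 ≤ k ∧ cmax - ε ≤ Thr k}
        ⌈(cmax - ε) * Δ / (ε * ((lmax + lmin) / 2))⌉₊) ∧
    (∃ C : ℝ, 0 < C ∧ ∀ ε : ℝ, 0 < ε → ε < cmax →
      ((⌈(cmax - ε) * Δ / (ε * ((lmax + lmin) / 2))⌉₊ : ℝ) ≤ C / ε)) := by
  have hB2 : (2:ℝ) ≤ (B:ℝ) := by exact_mod_cast hB
  have hS : (0:ℝ) < (lmax + lmin) / 2 := by linarith
  have hΔ' : Δ = ((B:ℝ) - 1) * (lmax - lmin) / (2 * ((B:ℝ) + 1)) := by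
    have hB1 : (B:ℝ) + 1 ≠ 0 := by linarith
    rw [hΔ]; field_simp; ring
  have hΔpos : 0 < Δ := by
    rw [hΔ']
    apply div_pos (by nlinarith) (by linarith)
  have hcpos : 0 < cmax := by
    rw [hc]; apply div_pos (by linarith) (by linarith)
  have hBS : (B:ℝ) = cmax * ((lmax + lmin) / 2) := by
    rw [hc, div_mul_eq_mul_div, eq_div_iff (by linarith : lmax + lmin ≠ 0)]; ring
  -- key equivalence
  have key : ∀ ε : ℝ, 0 < ε → ε < cmax → ∀ k : ℕ, 1 ≤ k →
      (cmax - ε ≤ Thr k ↔ (cmax - ε) * Δ / (ε * ((lmax + lmin) / 2)) ≤ (k : ℝ)) := by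
    intro ε hε hεc k hk
    have hk1 : (1:ℝ) ≤ (k:ℝ) := by exact_mod_cast hk
    have hk0 : (0:ℝ) < (k:ℝ) := by linarith
    have hrw : (lmax + lmin) / 2 + Δ / (k:ℝ)
        = ((k:ℝ) * ((lmax + lmin) / 2) + Δ) / (k:ℝ) := by
      field_simp
    have hden : (0:ℝ) < (k:ℝ) * ((lmax + lmin) / 2) + Δ := by positivity
    rw [hThr, hrw, div_div_eq_mul_div, le_div_iff₀ hden,
      div_le_iff₀ (by positivity : (0:ℝ) < ε * ((lmax + lmin) / 2))]
    constructor
    · intro h1; nlinarith [h1, hBS]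
    · intro h1; nlinarith [h1, hBS]
  refine ⟨key, ?_, ?_⟩
  · intro ε hε hεc
    have hxpos : 0 < (cmax - ε) * Δ / (ε * ((lmax + lmin) / 2)) := by
      apply div_pos (mul_pos (by linarith) hΔpos) (by positivity)
    constructor
    · refine ⟨Nat.one_le_ceil_iff.mpr hxpos, ?_⟩
      have h1 : 1 ≤ ⌈(cmax - ε) * Δ / (ε * ((lmax + lmin) / 2))⌉₊ :=
        Nat.one_le_ceil_iff.mpr hxpos
      exact (key ε hε hεc _ h1).mpr (Nat.le_ceil _)
    · intro k hk
      exact Nat.ceil_le.mpr ((key ε hε hεc k hk.1).mp hk.2)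
  · refine ⟨cmax * Δ / ((lmax + lmin) / 2) + cmax, by positivity, ?_⟩
    intro ε hε hεc
    have hxpos : 0 ≤ (cmax - ε) * Δ / (ε * ((lmax + lmin) / 2)) :=
      div_nonneg (mul_nonneg (by linarith) hΔpos.le) (by positivity)
    have hceil := Nat.ceil_lt_add_one hxpos
    have hx1 : (cmax - ε) * Δ / (ε * ((lmax + lmin) / 2))
        ≤ cmax * Δ / (ε * ((lmax + lmin) / 2)) := by
      exact div_le_div₀ (by positivity) (by nlinarith) (by positivity) le_rfl
    have hx2 : cmax * Δ / (ε * ((lmax + lmin) / 2))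
        = (cmax * Δ / ((lmax + lmin) / 2)) / ε := by
      field_simp
    have hone : 1 ≤ cmax / ε := (one_le_div hε).mpr (le_of_lt hεc)
    have : (cmax * Δ / ((lmax + lmin) / 2) + cmax) / ε
        = (cmax * Δ / ((lmax + lmin) / 2)) / ε + cmax / ε := add_div _ _ _
    rw [this]
    calc (⌈(cmax - ε) * Δ / (ε * ((lmax + lmin) / 2))⌉₊ : ℝ)
        ≤ (cmax - ε) * Δ / (ε * ((lmax + lmin) / 2)) + 1 := le_of_lt hceil
      _ ≤ (cmax * Δ / ((lmax + lmin) / 2)) / ε + cmax / ε := by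
          rw [← hx2]; linarith
end

section
/- Let B ≥ 1 and k ≥ 1 be integers and λ > 0. Let T_1, …, T_{B−1} be independent exponential random variables with rate λ/k (the interarrival times within a bin of a Poisson arrival stream of rate λ split uniformly among k equiprobable bins). For a request arriving in position j ∈ {1, …, B} of its batch, its batch-formation waiting time is W_j = Σ_{m=j}^{B−1} T_m (with W_B = 0). Then (1/B) Σ_{j=1}^{B} E[W_j] = ((B−1)/(2λ)) k. Consequently, if additionally services start immediately upon batch formation, service times are i.i.d. uniform on [l_min, l_max] with 0 < l_min < l_max, and bins are equally spaced, the expected latency of a request equals (l_max + l_min)/2 + (1/k)((B/(B+1)) l_max + (1/(B+1)) l_min − (l_max + l_min)/2) + ((B−1)/(2λ)) k. -/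
open MeasureTheory ProbabilityTheory Finset

open Real Set in
open scoped NNReal ENNReal in
lemma exp_mean {r : ℝ} (hr : 0 < r) :
    Integrable id (expMeasure r) ∧ ∫ x, x ∂(expMeasure r) = 1 / r := by
  have hmeq : expMeasure r = volume.withDensity
      (fun x => ((exponentialPDFReal r x).toNNReal : ℝ≥0∞)) := rfl
  have hf : Measurable fun x => (exponentialPDFReal r x).toNNReal :=
    (measurable_exponentialPDFReal r).real_toNNReal
  have hsmul : (fun x => (exponentialPDFReal r x).toNNReal • x)
      = (Set.Ioi (0:ℝ)).indicator (fun x => x ^ ((2:ℝ)-1) * exp (-(r * x)) * r) := by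
    ext x
    simp only [NNReal.smul_def, smul_eq_mul, Set.indicator_apply, Set.mem_Ioi]
    rw [Real.coe_toNNReal _ (exponentialPDFReal_nonneg hr x)]
    unfold exponentialPDFReal gammaPDFReal
    split_ifs with h1 h2 h2
    · rw [show (2:ℝ)-1 = 1 by norm_num, rpow_one]
      simp [Real.Gamma_one]
      ring
    · -- 0 ≤ x but ¬ 0 < x, so x = 0
      have : x = 0 := le_antisymm (not_lt.mp h2) h1
      simp [this]
    · exact absurd (le_of_lt h2) h1
    · simp
  have hint : IntegrableOn (fun x => x ^ ((2:ℝ)-1) * exp (-(r * x)) * r) (Set.Ioi 0) := by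
    apply Integrable.mul_const
    have := integrableOn_rpow_mul_exp_neg_mul_rpow (p := 1) (s := (2:ℝ)-1) (b := r)
      (by norm_num) one_pos hr
    refine this.congr_fun (fun x hx => ?_) measurableSet_Ioi
    simp only [Real.rpow_one]; ring_nf
  constructor
  · rw [hmeq]
    refine (integrable_withDensity_iff_integrable_smul hf).mpr ?_
    simp only [id]
    rw [hsmul]
    exact hint.integrable_indicator measurableSet_Ioi
  · rw [hmeq, integral_withDensity_eq_integral_smul hf]
    rw [show (fun x => (exponentialPDFReal r x).toNNReal • x)
        = (Set.Ioi (0:ℝ)).indicator (fun x => x ^ ((2:ℝ)-1) * exp (-(r * x)) * r) from hsmul]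
    rw [integral_indicator measurableSet_Ioi]
    rw [integral_mul_const, integral_rpow_mul_exp_neg_mul_Ioi (by norm_num) hr,
      Real.Gamma_two]
    rw [one_div, mul_one, show (2:ℝ) = ((2:ℕ):ℝ) by norm_num, Real.rpow_natCast]
    field_simp

lemma sum_aux : ∀ n : ℕ, ∑ i ∈ Finset.range n, ((i:ℝ)+1) = n*(n+1)/2 := by
  intro n
  induction n with
  | zero => simp
  | succ n ih => rw [Finset.sum_range_succ, ih]; push_cast; ring

/-- let `T 0, …, T (B-2)` be the `B−1` independent interarrival times
(exponential of rate `λ/k`) within a bin, and let the request arriving in position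
`j ∈ {0, …, B−1}` of its batch wait `W_j = Σ_{m ≥ j} T m` for the batch to form.  Then
the average expected batch-formation time is `(1/B) Σ_j E[W_j] = ((B−1)/(2λ)) k`, and
with expected batch service time
`E_k = (l_max+l_min)/2 + (1/k)((B/(B+1)) l_max + (1/(B+1)) l_min − (l_max+l_min)/2)`
for i.i.d. uniform service times on `[l_min, l_max]` and equally spaced bins,
the expected latency of a request equals `E_k + ((B−1)/(2λ)) k`. -/
theorem multibin_expected_latency {Ω : Type*} [MeasureSpace Ω]
    [IsProbabilityMeasure (ℙ : Measure Ω)]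
    (B k : ℕ) (hB : 1 ≤ B) (hk : 1 ≤ k) (lam : ℝ) (hlam : 0 < lam)
    (T : Fin (B - 1) → Ω → ℝ) (hmeas : ∀ m, Measurable (T m))
    (hindep : iIndepFun T ℙ)
    (hexp : ∀ m, Measure.map (T m) ℙ = expMeasure (lam / k))
    (lmin lmax : ℝ) (h0 : 0 < lmin) (h : lmin < lmax)
    (Ek : ℝ)
    (hEk : Ek = (lmax + lmin) / 2 +
      (1 / (k : ℝ)) *
        (((B : ℝ) / (B + 1)) * lmax + (1 / ((B : ℝ) + 1)) * lmin - (lmax + lmin) / 2)) :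
    (1 / (B : ℝ)) * ∑ j ∈ Finset.range B,
        (∫ ω, ∑ m ∈ Finset.univ.filter (fun m : Fin (B - 1) => j ≤ (m : ℕ)), T m ω ∂ℙ) =
      (((B : ℝ) - 1) / (2 * lam)) * k ∧
    (1 / (B : ℝ)) * ∑ j ∈ Finset.range B,
        ((∫ ω, ∑ m ∈ Finset.univ.filter (fun m : Fin (B - 1) => j ≤ (m : ℕ)), T m ω ∂ℙ)
          + Ek) =
      Ek + (((B : ℝ) - 1) / (2 * lam)) * k := by
  have hkR : (0:ℝ) < k := by exact_mod_cast hk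
  have hr : 0 < lam / k := div_pos hlam hkR
  have hBR : (0:ℝ) < B := by exact_mod_cast hB
  obtain ⟨hIexp, hMexp⟩ := exp_mean hr
  -- each T m is integrable with mean k/lam
  have hint : ∀ m, Integrable (T m) ℙ := by
    intro m
    have := (integrable_map_measure aestronglyMeasurable_id (hmeas m).aemeasurable).mp
      (by rw [hexp m]; exact hIexp)
    simpa [Function.comp] using this
  have hmean : ∀ m, ∫ ω, T m ω ∂ℙ = k / lam := by
    intro m
    have h2 : ∫ x, x ∂(Measure.map (T m) ℙ) = ∫ ω, T m ω ∂ℙ :=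
      integral_map (hmeas m).aemeasurable aestronglyMeasurable_id
    rw [← h2, hexp m, hMexp, one_div_div]
  -- expectation of each W_j
  have hW : ∀ j, (∫ ω, ∑ m ∈ Finset.univ.filter (fun m : Fin (B - 1) => j ≤ (m : ℕ)), T m ω ∂ℙ)
      = ((Finset.univ.filter (fun m : Fin (B - 1) => j ≤ (m : ℕ))).card : ℝ) * (k / lam) := by
    intro j
    rw [integral_finset_sum _ (fun m _ => hint m)]
    rw [Finset.sum_congr rfl (fun m _ => hmean m), Finset.sum_const, nsmul_eq_mul]
  -- total sum
  have hsum : ∑ j ∈ Finset.range B,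
      (∫ ω, ∑ m ∈ Finset.univ.filter (fun m : Fin (B - 1) => j ≤ (m : ℕ)), T m ω ∂ℙ)
      = (((B:ℝ)-1) * B / 2) * (k / lam) := by
    rw [Finset.sum_congr rfl (fun j _ => hW j)]
    rw [← Finset.sum_mul]
    congr 1
    have hswap : ∑ j ∈ Finset.range B,
        (((Finset.univ.filter (fun m : Fin (B - 1) => j ≤ (m : ℕ))).card : ℝ))
        = ∑ m : Fin (B-1), (((Finset.range B).filter (fun j => j ≤ (m:ℕ))).card : ℝ) := by
      simp only [Finset.card_filter]
      push_cast
      rw [Finset.sum_comm]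
    rw [hswap]
    have hcard : ∀ m : Fin (B-1), ((Finset.range B).filter (fun j => j ≤ (m:ℕ))).card
        = (m:ℕ) + 1 := by
      intro m
      have hm := m.isLt
      have : (Finset.range B).filter (fun j => j ≤ (m:ℕ)) = Finset.range ((m:ℕ)+1) := by
        ext j; simp; omega
      rw [this, Finset.card_range]
    rw [Finset.sum_congr rfl (fun m _ => by rw [hcard m])]
    push_cast
    rw [Fin.sum_univ_eq_sum_range (fun i => (i:ℝ)+1), sum_aux]
    rw [Nat.cast_sub hB]
    push_cast
    ring
  have hfirst : (1 / (B : ℝ)) * ∑ j ∈ Finset.range B,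
      (∫ ω, ∑ m ∈ Finset.univ.filter (fun m : Fin (B - 1) => j ≤ (m : ℕ)), T m ω ∂ℙ)
      = (((B : ℝ) - 1) / (2 * lam)) * k := by
    rw [hsum]
    field_simp
  refine ⟨hfirst, ?_⟩
  rw [Finset.sum_add_distrib, Finset.sum_const, Finset.card_range, nsmul_eq_mul,
    mul_add, hfirst, mul_comm ((B:ℝ)) Ek, ← mul_assoc]
  rw [one_div, mul_right_comm, inv_mul_cancel₀ (ne_of_gt hBR), one_mul]
  ring
end

section
/- Let B ≥ 2 and k ≥ 2 be integers and H_B = Σ_{j=1}^{B} 1/j. Define L_1 = H_B and L_m = 1 + log(L_{m−1}) for m > 1. Define f on q = (q_1, …, q_{k−1}) ∈ (0, ∞)^{k−1}, with the convention q_0 = 1, by f(q) = Σ_{i=1}^{k−1} (q_i − q_{i−1}) log(q_i) + q_{k−1}(H_B − log(q_{k−1})). Then f attains its minimum over (0, ∞)^{k−1} at the point q* given by q*_i = 1/∏_{j=1}^{i} L_{k−j} for i = 1, …, k−1; equivalently, for any rate μ > 0 the minimizing bin boundaries l_i = −(1/μ) log(q*_i) are l_i = (1/μ) Σ_{j=1}^{i}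 log(L_{k−j}). -/
open Finset

/-- `LseqAux HB m` is `L_{m+1}` from the paper: `L_1 = H_B`, `L_m = 1 + log L_{m−1}`. -/
noncomputable def LseqAux (HB : ℝ) : ℕ → ℝ
  | 0 => HB
  | m + 1 => 1 + Real.log (LseqAux HB m)

/-- The objective `f(q) = Σ_{i=1}^{k−1} (q_i − q_{i−1}) log q_i
  + q_{k−1}(H_B − log q_{k−1})` (with the convention `q 0 = 1` supplied separately). -/
noncomputable def fExpBound (k : ℕ) (HB : ℝ) (q : ℕ → ℝ) : ℝ :=
  (∑ i ∈ Finset.Icc 1 (k - 1), (q i - q (i - 1)) * Real.log (q i)) +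
    q (k - 1) * (HB - Real.log (q (k - 1)))

/-- The claimed minimizer `q*_i = 1/∏_{j=1}^i L_{k−j}` (so `q* 0 = 1`). -/
noncomputable def qStar (k : ℕ) (HB : ℝ) (i : ℕ) : ℝ :=
  1 / ∏ j ∈ Finset.Icc 1 i, LseqAux HB (k - j - 1)

lemma Icc_one_sum (f : ℕ → ℝ) (n : ℕ) :
    ∑ j ∈ Icc 1 n, f j = ∑ j ∈ range n, f (j + 1) := by
  rw [← Finset.Ico_add_one_right_eq_Icc, Finset.sum_Ico_eq_sum_range]
  exact Finset.sum_congr (by simp) (fun j _ => by rw [Nat.add_comm])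

lemma Icc_one_prod (f : ℕ → ℝ) (n : ℕ) :
    ∏ j ∈ Icc 1 n, f j = ∏ j ∈ range n, f (j + 1) := by
  rw [← Finset.Ico_add_one_right_eq_Icc, Finset.prod_Ico_eq_prod_range]
  exact Finset.prod_congr (by simp) (fun j _ => by rw [Nat.add_comm])

lemma Lseq_ge_one {HB : ℝ} (h : 1 ≤ HB) : ∀ n, 1 ≤ LseqAux HB n
  | 0 => h
  | n + 1 => by
      have := Real.log_nonneg (Lseq_ge_one h n)
      simp only [LseqAux]
      linarith

lemma Lseq_pos {HB : ℝ} (h : 1 ≤ HB) (n : ℕ) : 0 < LseqAux HB n :=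
  lt_of_lt_of_le one_pos (Lseq_ge_one h n)

lemma keyIneq {a y c : ℝ} (ha : 0 < a) (hy : 0 < y) (hc : 0 < c) :
    a * (1 + Real.log c) ≤ a * (Real.log a - Real.log y) + y * c := by
  have h1 : (0:ℝ) < y * c / a := by positivity
  have h := Real.log_le_sub_one_of_pos h1
  rw [Real.log_div (by positivity) ha.ne', Real.log_mul hy.ne' hc.ne'] at h
  have h2 : a * (y * c / a) = y * c := by field_simp
  nlinarith [mul_le_mul_of_nonneg_left h ha.le]

noncomputable def Gaux (HB : ℝ) : ℕ → ℝ → (ℕ → ℝ) → ℝ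
  | 0, a, _ => HB * a
  | n + 1, a, q => a * (Real.log a - Real.log (q 1)) + Gaux HB n (q 1) (fun i => q (i + 1))

lemma fexp_eq (HB : ℝ) : ∀ (n : ℕ) (q : ℕ → ℝ),
    (∑ i ∈ Icc 1 n, (q i - q (i - 1)) * Real.log (q i)) + q n * (HB - Real.log (q n))
      = Gaux HB n (q 0) q - q 0 * Real.log (q 0)
  | 0, q => by simp [Gaux]; ring
  | n + 1, q => by
      have IH := fexp_eq HB n (fun i => q (i + 1))
      rw [Icc_one_sum] at IH ⊢
      rw [Finset.sum_range_succ']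
      simp only [Gaux, Nat.add_sub_cancel, Nat.zero_add] at *
      linear_combination IH

lemma Gaux_ge (HB : ℝ) (hHB : 1 ≤ HB) : ∀ (n : ℕ) (a : ℝ) (q : ℕ → ℝ), 0 < a →
    (∀ i, 1 ≤ i → i ≤ n → 0 < q i) → a * LseqAux HB n ≤ Gaux HB n a q
  | 0, a, q, ha, _ => by simp only [Gaux, LseqAux]; linarith [mul_comm a HB]
  | n + 1, a, q, ha, hq => by
      have hq1 : 0 < q 1 := hq 1 le_rfl (by omega)
      have IH := Gaux_ge HB hHB n (q 1) (fun i => q (i + 1)) hq1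
        (fun i h1 h2 => hq (i + 1) (by omega) (by omega))
      have hk := keyIneq ha hq1 (Lseq_pos hHB n)
      simp only [Gaux, LseqAux]
      nlinarith [hk, IH]

lemma qStar_succ (HB : ℝ) (n i : ℕ) :
    qStar (n + 2) HB (i + 1) = qStar (n + 2) HB 1 * qStar (n + 1) HB i := by
  simp only [qStar, Icc_one_prod]
  rw [Finset.prod_range_succ']
  have h1 : ∀ j ∈ range i,
      LseqAux HB (n + 2 - (j + 1 + 1) - 1) = LseqAux HB (n + 1 - (j + 1) - 1) := by
    intro j _
    congr 1
    omega
  rw [Finset.prod_congr rfl h1]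
  have h2 : n + 2 - (0 + 1) - 1 = n := by omega
  rw [h2]
  simp only [Finset.prod_range_one]
  have h3 : n + 2 - (0 + 1) - 1 = n := by omega
  rw [h3]
  rw [one_div, one_div, one_div, mul_inv]
  ring

lemma qStar_zero (k : ℕ) (HB : ℝ) : qStar k HB 0 = 1 := by
  simp [qStar]

lemma qStar_pos {HB : ℝ} (hHB : 1 ≤ HB) (k i : ℕ) : 0 < qStar k HB i := by
  unfold qStar
  have : 0 < ∏ j ∈ Icc 1 i, LseqAux HB (k - j - 1) :=
    Finset.prod_pos (fun j _ => Lseq_pos hHB _)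
  positivity

lemma qStar_one (HB : ℝ) (n : ℕ) : qStar (n + 2) HB 1 = 1 / LseqAux HB n := by
  simp only [qStar]
  rw [Finset.Icc_self, Finset.prod_singleton]
  norm_num

lemma Gaux_eq (HB : ℝ) (hHB : 1 ≤ HB) : ∀ (n : ℕ) (a : ℝ) (q : ℕ → ℝ), 0 < a →
    (∀ i, 1 ≤ i → i ≤ n → q i = a * qStar (n + 1) HB i) →
    Gaux HB n a q = a * LseqAux HB n
  | 0, a, q, ha, _ => by simp only [Gaux, LseqAux]; ring
  | n + 1, a, q, ha, hq => by
      have hLn := Lseq_pos hHB n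
      have hq1 : q 1 = a / LseqAux HB n := by
        rw [hq 1 le_rfl (by omega), qStar_one]
        field_simp
      have hq1pos : 0 < q 1 := by rw [hq1]; positivity
      have hshift : ∀ i, 1 ≤ i → i ≤ n → q (i + 1) = q 1 * qStar (n + 1) HB i := by
        intro i h1 h2
        rw [hq (i + 1) (by omega) (by omega), qStar_succ, hq 1 le_rfl (by omega)]
        ring
      have IH := Gaux_eq HB hHB n (q 1) (fun i => q (i + 1)) hq1pos hshift
      simp only [Gaux, LseqAux]
      rw [IH, hq1]
      rw [Real.log_div ha.ne' hLn.ne']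
      field_simp
      ring

/-- for `B ≥ 2`, `k ≥ 2` and `H_B` the `B`-th harmonic number, the
function `f` attains its minimum over `(0,∞)^{k−1}` at `q*` with
`q*_i = 1/∏_{j=1}^i L_{k−j}`; equivalently, for any `μ > 0` the minimizing bin
boundaries `l_i = −(1/μ) log q*_i` equal `(1/μ) Σ_{j=1}^i log L_{k−j}`. -/
theorem exp_bound_minimizer (B k : ℕ) (hB : 2 ≤ B) (hk : 2 ≤ k)
    (HB : ℝ) (hHB : HB = ∑ j ∈ Finset.range B, 1 / ((j : ℝ) + 1)) :
    (∀ i : ℕ, 1 ≤ i → i ≤ k - 1 → 0 < qStar k HB i) ∧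
      (∀ q : ℕ → ℝ, q 0 = 1 → (∀ i : ℕ, 1 ≤ i → i ≤ k - 1 → 0 < q i) →
        fExpBound k HB (qStar k HB) ≤ fExpBound k HB q) ∧
      (∀ μ : ℝ, 0 < μ → ∀ i : ℕ, 1 ≤ i → i ≤ k - 1 →
        -(1 / μ) * Real.log (qStar k HB i) =
          (1 / μ) * ∑ j ∈ Finset.Icc 1 i, Real.log (LseqAux HB (k - j - 1))) := by
  have hHB1 : 1 ≤ HB := by
    rw [hHB]
    calc (1:ℝ) = 1 / ((0:ℕ) + 1) := by norm_num
    _ ≤ ∑ j ∈ Finset.range B, 1 / ((j : ℝ) + 1) := by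
        apply Finset.single_le_sum (f := fun j : ℕ => 1 / ((j : ℝ) + 1))
        · intro i _
          positivity
        · exact Finset.mem_range.mpr (by omega)
  refine ⟨fun i _ _ => qStar_pos hHB1 k i, ?_, ?_⟩
  · intro q hq0 hqpos
    have hkk : k - 1 + 1 = k := by omega
    have e1 : fExpBound k HB q = Gaux HB (k - 1) 1 q := by
      have := fexp_eq HB (k - 1) q
      rw [hq0] at this
      simp only [Real.log_one, mul_zero, sub_zero] at this
      exact this
    have e2 : fExpBound k HB (qStar k HB) = Gaux HB (k - 1) 1 (qStar k HB) := by
      have := fexp_eq HB (k - 1) (qStar k HB)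
      rw [qStar_zero] at this
      simp only [Real.log_one, mul_zero, sub_zero] at this
      exact this
    have e3 : Gaux HB (k - 1) 1 (qStar k HB) = 1 * LseqAux HB (k - 1) := by
      apply Gaux_eq HB hHB1 (k - 1) 1 (qStar k HB) one_pos
      intro i h1 h2
      rw [hkk, one_mul]
    have e4 : 1 * LseqAux HB (k - 1) ≤ Gaux HB (k - 1) 1 q :=
      Gaux_ge HB hHB1 (k - 1) 1 q one_pos hqpos
    rw [e1, e2, e3]
    exact e4
  · intro μ hμ i h1 h2
    have hlog : Real.log (qStar k HB i)
        = -∑ j ∈ Finset.Icc 1 i, Real.log (LseqAux HB (k - j - 1)) := by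
      unfold qStar
      rw [one_div, Real.log_inv]
      congr 1
      exact Real.log_prod (fun j _ => (Lseq_pos hHB1 _).ne')
    rw [hlog]
    ring
end

section
/- Let k ≥ 3 be an integer and let q_1, …, q_{k−1} > 0 with the convention q_0 = 1. Let M be the (k−1)×(k−1) symmetric tridiagonal matrix with diagonal entries M_{ii} = (q_i + q_{i−1})/q_i² for i = 1, …, k−2, M_{k−1,k−1} = q_{k−2}/q_{k−1}², and off-diagonal entries M_{i,j} = −1/q_{max(i,j)} for |i − j| = 1, and 0 otherwise. Then det(M) = 1/(q_1 q_2 ⋯ q_{k−2} q_{k−1}²) > 0, and M is positive definite. -/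
open Finset

/-- The `(k−1)×(k−1)` Hessian matrix (rows/columns indexed by `0,…,k−2`, standing for
`1,…,k−1`): diagonal entries `(q_i + q_{i−1})/q_i²` for `i ≤ k−2` and
`q_{k−2}/q_{k−1}²` for `i = k−1`, off-diagonal entries `−1/q_{max(i,j)}` for
`|i − j| = 1`, and `0` otherwise. -/
noncomputable def hessExpBound (k : ℕ) (q : ℕ → ℝ) :
    Matrix (Fin (k - 1)) (Fin (k - 1)) ℝ := fun i j =>
  if i = j then
    if (i : ℕ) + 1 = k - 1 then q (k - 2) / (q (k - 1)) ^ 2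
    else (q ((i : ℕ) + 1) + q (i : ℕ)) / (q ((i : ℕ) + 1)) ^ 2
  else if (i : ℕ) + 1 = (j : ℕ) ∨ (j : ℕ) + 1 = (i : ℕ) then
    -1 / q (max ((i : ℕ) + 1) ((j : ℕ) + 1))
  else 0


open Matrix

noncomputable def bEntry (q : ℕ → ℝ) (l m : ℕ) : ℝ :=
  if m = l then Real.sqrt (q l) / q (l + 1)
  else if m + 1 = l then -(1 / Real.sqrt (q l)) else 0

noncomputable def bMat (k : ℕ) (q : ℕ → ℝ) :
    Matrix (Fin (k - 1)) (Fin (k - 1)) ℝ := fun i j => bEntry q (i : ℕ) (j : ℕ)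

lemma hessFactor (k : ℕ) (hk : 3 ≤ k) (q : ℕ → ℝ)
    (hq : ∀ l, l ≤ k - 1 → 0 < q l) :
    hessExpBound k q = (bMat k q)ᵀ * bMat k q := by
  ext i j
  obtain ⟨a, ha⟩ := i
  obtain ⟨b, hb⟩ := j
  rw [Matrix.mul_apply]
  simp only [Matrix.transpose_apply, bMat, Fin.val_mk]
  rw [Fin.sum_univ_eq_sum_range (fun l => bEntry q l a * bEntry q l b) (k - 1)]
  set n := k - 1 with hn
  by_cases hab : a = b
  · -- diagonal
    subst hab
    have hieqj : (⟨a, ha⟩ : Fin n) = ⟨a, hb⟩ := rfl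
    have step : ∀ l ∈ range n, bEntry q l a * bEntry q l a =
        (if l = a then (Real.sqrt (q a) / q (a+1))^2 else 0)
        + (if l = a + 1 then (1 / Real.sqrt (q (a+1)))^2 else 0) := by
      intro l _
      simp only [bEntry]
      split_ifs <;> first | (exfalso; omega) | (subst_vars; ring)
    rw [Finset.sum_congr rfl step, Finset.sum_add_distrib,
      Finset.sum_ite_eq' (range n) a, Finset.sum_ite_eq' (range n) (a+1)]
    simp only [Finset.mem_range, ha, if_true, hessExpBound, if_pos hieqj, Fin.val_mk]
    have hq1 : 0 < q (a + 1) := hq _ (by omega)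
    have hq0' : 0 ≤ q a := (hq a (by omega)).le
    have hsq : Real.sqrt (q a) ^ 2 = q a := Real.sq_sqrt hq0'
    by_cases hlast : a + 1 = n
    · rw [if_neg (by omega : ¬ a + 1 < n), if_pos (by omega : a + 1 = k - 1), add_zero]
      have e1 : a = k - 2 := by omega
      have e2 : a + 1 = k - 1 := by omega
      rw [div_pow, hsq, e2, e1]
    · rw [if_pos (by omega : a + 1 < n), if_neg (by omega : ¬ a + 1 = k - 1)]
      have hsq1 : Real.sqrt (q (a+1)) ^ 2 = q (a+1) := Real.sq_sqrt hq1.le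
      rw [div_pow, div_pow, hsq, hsq1, one_pow]
      field_simp
      try ring
  · -- off diagonal
    have hne : (⟨a, ha⟩ : Fin n) ≠ ⟨b, hb⟩ := fun h => hab (by simpa using congrArg Fin.val h)
    show (if (⟨a, ha⟩ : Fin n) = ⟨b, hb⟩ then _ else _) = _
    rw [if_neg hne]
    simp only [Fin.val_mk]
    by_cases h1 : a + 1 = b
    · have step : ∀ l ∈ range n, bEntry q l a * bEntry q l b =
          (if l = b then -(1 / Real.sqrt (q b)) * (Real.sqrt (q b) / q (b+1)) else 0) := by
        intro l _
        simp only [bEntry]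
        split_ifs <;> first | (exfalso; omega) | (subst_vars; ring)
      rw [Finset.sum_congr rfl step, Finset.sum_ite_eq' (range n) b]
      rw [if_pos (by omega : a + 1 = b ∨ b + 1 = a), if_pos (Finset.mem_range.mpr hb)]
      have hm : max (a + 1) (b + 1) = b + 1 := by omega
      rw [hm]
      have hqb : 0 < q b := hq _ (by omega)
      have hqb1 : 0 < q (b+1) := hq _ (by omega)
      have hs : Real.sqrt (q b) ≠ 0 := ne_of_gt (Real.sqrt_pos.mpr hqb)
      field_simp
      try ring
    · by_cases h2 : b + 1 = a
      · have step : ∀ l ∈ range n, bEntry q l a * bEntry q l b =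
            (if l = a then (Real.sqrt (q a) / q (a+1)) * (-(1 / Real.sqrt (q a))) else 0) := by
          intro l _
          simp only [bEntry]
          split_ifs <;> first | (exfalso; omega) | (subst_vars; ring)
        rw [Finset.sum_congr rfl step, Finset.sum_ite_eq' (range n) a]
        rw [if_pos (by omega : a + 1 = b ∨ b + 1 = a), if_pos (Finset.mem_range.mpr ha)]
        have hm : max (a + 1) (b + 1) = a + 1 := by omega
        rw [hm]
        have hqa : 0 < q a := hq _ (by omega)
        have hqa1 : 0 < q (a+1) := hq _ (by omega)
        have hs : Real.sqrt (q a) ≠ 0 := ne_of_gt (Real.sqrt_pos.mpr hqa)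
        field_simp
        try ring
      · rw [if_neg (by omega : ¬ (a + 1 = b ∨ b + 1 = a))]
        symm
        apply Finset.sum_eq_zero
        intro l _
        simp only [bEntry]
        split_ifs <;> first | (exfalso; omega) | (subst_vars; ring)

lemma bMat_blockTriangular (k : ℕ) (q : ℕ → ℝ) :
    (bMat k q).BlockTriangular OrderDual.toDual := by
  intro i j hij
  have h : (i : ℕ) < (j : ℕ) := hij
  simp only [bMat, bEntry]
  rw [if_neg (by omega), if_neg (by omega)]

lemma bMat_det (k : ℕ) (q : ℕ → ℝ) :
    (bMat k q).det = ∏ l ∈ range (k - 1), (Real.sqrt (q l) / q (l + 1)) := by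
  rw [Matrix.det_of_lowerTriangular _ (bMat_blockTriangular k q)]
  have : ∀ i : Fin (k - 1), bMat k q i i = Real.sqrt (q (i : ℕ)) / q ((i : ℕ) + 1) := by
    intro i; simp [bMat, bEntry]
  rw [Finset.prod_congr rfl (fun i _ => this i)]
  exact Fin.prod_univ_eq_prod_range (fun l => Real.sqrt (q l) / q (l + 1)) (k - 1)

lemma range_prod_eq_Icc (q : ℕ → ℝ) (m : ℕ) :
    ∏ l ∈ range m, q (l + 1) = ∏ i ∈ Icc 1 m, q i := by
  induction m with
  | zero => simp
  | succ m ih => rw [Finset.prod_range_succ, ih, Finset.prod_Icc_succ_top (by omega)]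


/-- for `k ≥ 3` and positive `q_1, …, q_{k−1}` (with `q_0 = 1`), the
matrix `M` above has determinant `1/(q_1 q_2 ⋯ q_{k−2} q_{k−1}²) > 0` and is positive
definite. -/
theorem hessExpBound_det_posDef (k : ℕ) (hk : 3 ≤ k) (q : ℕ → ℝ) (hq0 : q 0 = 1)
    (hq : ∀ i : ℕ, 1 ≤ i → i ≤ k - 1 → 0 < q i) :
    (hessExpBound k q).det = 1 / ((∏ i ∈ Finset.Icc 1 (k - 2), q i) * (q (k - 1)) ^ 2) ∧
      0 < (hessExpBound k q).det ∧ (hessExpBound k q).PosDef := by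

  have hq' : ∀ l, l ≤ k - 1 → 0 < q l := by
    intro l hl
    rcases Nat.eq_zero_or_pos l with h | h
    · rw [h, hq0]; exact one_pos
    · exact hq l h hl
  have hfac := hessFactor k hk q hq'
  -- determinant of B
  have hdetB := bMat_det k q
  have hdetBpos : 0 < (bMat k q).det := by
    rw [hdetB]
    apply Finset.prod_pos
    intro l hl
    have hl' := Finset.mem_range.mp hl
    exact div_pos (Real.sqrt_pos.mpr (hq' l (by omega))) (hq' (l + 1) (by omega))
  have hP : 0 < ∏ i ∈ Icc 1 (k - 2), q i := by
    apply Finset.prod_pos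
    intro i hi
    have := Finset.mem_Icc.mp hi
    exact hq' i (by omega)
  have hq1 : 0 < q (k - 1) := hq' (k - 1) le_rfl
  have hdet : (hessExpBound k q).det
      = 1 / ((∏ i ∈ Finset.Icc 1 (k - 2), q i) * (q (k - 1)) ^ 2) := by
    rw [hfac, Matrix.det_mul, Matrix.det_transpose, hdetB, ← Finset.prod_mul_distrib]
    have hterm : ∀ l ∈ range (k - 1),
        (Real.sqrt (q l) / q (l + 1)) * (Real.sqrt (q l) / q (l + 1))
          = q l / (q (l + 1)) ^ 2 := by
      intro l hl
      have hl' := Finset.mem_range.mp hl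
      rw [div_mul_div_comm, Real.mul_self_sqrt (hq' l (by omega)).le, ← sq]
    rw [Finset.prod_congr rfl hterm, Finset.prod_div_distrib, Finset.prod_pow]
    have hA : ∏ l ∈ range (k - 1), q l = ∏ i ∈ Icc 1 (k - 2), q i := by
      rw [show k - 1 = (k - 2) + 1 by omega, Finset.prod_range_succ', hq0, mul_one,
        range_prod_eq_Icc]
    have hB : ∏ l ∈ range (k - 1), q (l + 1)
        = (∏ i ∈ Icc 1 (k - 2), q i) * q (k - 1) := by
      rw [range_prod_eq_Icc, show k - 1 = (k - 2) + 1 by omega,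
        Finset.prod_Icc_succ_top (by omega)]
    rw [hA, hB]
    rw [mul_pow]
    field_simp
  refine ⟨hdet, by rw [hdet]; positivity, ?_⟩
  -- positive definiteness
  have hdetBne : (bMat k q).det ≠ 0 := ne_of_gt hdetBpos
  have hinj : Function.Injective ((bMat k q).mulVec) :=
    Matrix.mulVec_injective_iff_isUnit.mpr ((Matrix.isUnit_iff_isUnit_det _).mpr hdetBne.isUnit)
  rw [Matrix.posDef_iff_dotProduct_mulVec]
  constructor
  · rw [hfac]
    have := Matrix.isHermitian_conjTranspose_mul_self (bMat k q)
    rwa [Matrix.conjTranspose_eq_transpose_of_trivial] at this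
  · intro x hx
    have hBx : (bMat k q) *ᵥ x ≠ 0 := by
      intro h0
      apply hx
      apply hinj
      rw [h0, Matrix.mulVec_zero]
    have key : star x ⬝ᵥ (hessExpBound k q) *ᵥ x
        = ((bMat k q) *ᵥ x) ⬝ᵥ ((bMat k q) *ᵥ x) := by
      rw [hfac, ← Matrix.mulVec_mulVec, Matrix.dotProduct_mulVec, star_trivial,
        Matrix.vecMul_transpose]
    rw [key]
    have hnn : (0:ℝ) ≤ ((bMat k q) *ᵥ x) ⬝ᵥ ((bMat k q) *ᵥ x) :=
      Finset.sum_nonneg fun i _ => mul_self_nonneg _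
    rcases hnn.lt_or_eq with h | h
    · exact h
    · exact absurd (dotProduct_self_eq_zero.mp h.symm) hBx
end

section
/- Let k ≥ 4 be an integer and q_1, …, q_{k−1} > 0 with q_0 = 1, and let M be the (k−1)×(k−1) symmetric tridiagonal matrix with diagonal entries M_{ii} = (q_i + q_{i−1})/q_i² for i ≤ k−2 and M_{k−1,k−1} = q_{k−2}/q_{k−1}², and off-diagonal entries M_{i,j} = −1/q_{max(i,j)} for |i − j| = 1. Let f_n denote the determinant of the n-th leading principal submatrix of M (f_0 = 1, f_1 = M_{11}). Then for every n ∈ {2, …, k−2}, f_n = 1/(q_1 q_2 ⋯ q_{n−1} q_n²) + (1/q_n) f_{n−1}. -/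
open Finset

/-- `f_n`: the determinant of the `n`-th leading principal submatrix of the Hessian. -/
noncomputable def leadingMinor (k : ℕ) (q : ℕ → ℝ) (n : ℕ) (h : n ≤ k - 1) : ℝ :=
  ((hessExpBound k q).submatrix (Fin.castLE h) (Fin.castLE h)).det



lemma det_tridiag_step (m : ℕ) (A : Matrix (Fin (m+2)) (Fin (m+2)) ℝ)
    (hA : ∀ i j : Fin (m+2), (i:ℕ)+2 ≤ (j:ℕ) ∨ (j:ℕ)+2 ≤ (i:ℕ) → A i j = 0) :
    A.det = A (Fin.last (m+1)) (Fin.last (m+1)) *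
        (A.submatrix Fin.castSucc Fin.castSucc).det
      - A (Fin.last (m+1)) ((Fin.last m).castSucc) *
        A ((Fin.last m).castSucc) (Fin.last (m+1)) *
        (A.submatrix (fun i : Fin m => i.castSucc.castSucc)
          (fun i : Fin m => i.castSucc.castSucc)).det := by
  have hB : ∀ i : Fin (m+1),
      (A.submatrix Fin.castSucc ((Fin.last m).castSucc.succAbove)) i (Fin.last m)
        = if i = Fin.last m then A ((Fin.last m).castSucc) (Fin.last (m+1)) else 0 := by
    intro i
    have hcol : ((Fin.last m).castSucc).succAbove (Fin.last m) = Fin.last (m+1) := by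
      rw [Fin.succAbove_of_le_castSucc _ _ (le_refl _)]
      rfl
    rw [Matrix.submatrix_apply, hcol]
    by_cases h : i = Fin.last m
    · simp [h]
    · rw [if_neg h]
      apply hA
      left
      have : (i : ℕ) < m := by
        rcases lt_or_eq_of_le (Nat.lt_succ_iff.mp i.isLt) with h' | h'
        · exact h'
        · exact absurd (Fin.ext h') h
      simp [Fin.last]
      omega
  have hdetB : (A.submatrix Fin.castSucc ((Fin.last m).castSucc.succAbove)).det
      = A ((Fin.last m).castSucc) (Fin.last (m+1)) *
        (A.submatrix (fun i : Fin m => i.castSucc.castSucc)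
          (fun i : Fin m => i.castSucc.castSucc)).det := by
    rw [Matrix.det_succ_column _ (Fin.last m)]
    rw [Fin.sum_univ_castSucc]
    have hz : ∀ i : Fin m, (-1:ℝ) ^ ((i.castSucc : ℕ) + (Fin.last m : ℕ)) *
        (A.submatrix Fin.castSucc ((Fin.last m).castSucc.succAbove)) i.castSucc (Fin.last m) *
        ((A.submatrix Fin.castSucc ((Fin.last m).castSucc.succAbove)).submatrix
          i.castSucc.succAbove (Fin.last m).succAbove).det = 0 := by
      intro i
      rw [hB, if_neg (by simp [Fin.ext_iff, Fin.last]; omega)]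
      ring
    rw [Finset.sum_eq_zero (fun i _ => hz i), zero_add, hB, if_pos rfl]
    have hsign : (-1:ℝ) ^ ((Fin.last m : ℕ) + (Fin.last m : ℕ)) = 1 := by
      rw [show (Fin.last m : ℕ) + (Fin.last m : ℕ) = 2*m by simp [Fin.last]; ring, pow_mul]
      norm_num
    rw [hsign, one_mul]
    have hsub : ((A.submatrix Fin.castSucc ((Fin.last m).castSucc.succAbove)).submatrix
          (Fin.last m).succAbove (Fin.last m).succAbove)
        = A.submatrix (fun i : Fin m => i.castSucc.castSucc)
          (fun i : Fin m => i.castSucc.castSucc) := by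
      ext i j
      simp only [Matrix.submatrix_apply, Fin.succAbove_last]
      congr 1
      rw [Fin.succAbove_of_castSucc_lt]
      simp only [Fin.lt_iff_val_lt_val, Fin.coe_castSucc, Fin.val_last]
      exact j.isLt
    rw [hsub]
  rw [Matrix.det_succ_row A (Fin.last (m+1))]
  rw [Fin.sum_univ_castSucc, Fin.sum_univ_castSucc]
  have hz : ∀ j : Fin m, (-1:ℝ) ^ ((Fin.last (m+1) : ℕ) + (j.castSucc.castSucc : ℕ)) *
      A (Fin.last (m+1)) j.castSucc.castSucc *
      (A.submatrix (Fin.last (m+1)).succAbove (j.castSucc.castSucc).succAbove).det = 0 := by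
    intro j
    rw [hA _ _ (by right; simp [Fin.last] <;> omega)]
    ring
  rw [Finset.sum_eq_zero (fun j _ => hz j), zero_add]
  rw [Fin.succAbove_last, hdetB]
  have h1 : (-1:ℝ) ^ ((Fin.last (m+1) : ℕ) + ((Fin.last m).castSucc : ℕ)) = -1 := by
    rw [show (Fin.last (m+1) : ℕ) + ((Fin.last m).castSucc : ℕ) = 2*m+1 by
      simp [Fin.last]; ring, pow_succ, pow_mul]
    norm_num
  have h2 : (-1:ℝ) ^ ((Fin.last (m+1) : ℕ) + ((Fin.last (m+1)) : ℕ)) = 1 := by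
    rw [show (Fin.last (m+1) : ℕ) + ((Fin.last (m+1)) : ℕ) = 2*(m+1) by
      simp [Fin.last]; ring, pow_mul]
    norm_num
  rw [h1, h2]
  ring

lemma hess_zero (k : ℕ) (q : ℕ → ℝ) (i j : Fin (k-1))
    (hij : (i:ℕ)+2 ≤ (j:ℕ) ∨ (j:ℕ)+2 ≤ (i:ℕ)) : hessExpBound k q i j = 0 := by
  unfold hessExpBound
  rw [if_neg (by intro hh; subst hh; omega), if_neg (by omega)]

/-- for `k ≥ 4` and positive `q_1, …, q_{k−1}` (with `q_0 = 1`), the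
leading principal minors `f_n` of the Hessian satisfy, for every `n ∈ {2, …, k−2}`,
`f_n = 1/(q_1 ⋯ q_{n−1} q_n²) + (1/q_n) f_{n−1}`. -/
theorem hessExpBound_leading_minor_recursion (k : ℕ) (hk : 4 ≤ k) (q : ℕ → ℝ)
    (hq0 : q 0 = 1) (hq : ∀ i : ℕ, 1 ≤ i → i ≤ k - 1 → 0 < q i) :
    ∀ n : ℕ, 2 ≤ n → n ≤ k - 2 →
      ∀ (h : n ≤ k - 1) (h' : n - 1 ≤ k - 1),
        leadingMinor k q n h =
          1 / ((∏ j ∈ Finset.Icc 1 (n - 1), q j) * (q n) ^ 2) +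
            (1 / q n) * leadingMinor k q (n - 1) h' := by
  suffices H : ∀ n : ℕ, 1 ≤ n → n ≤ k - 2 →
      ∀ (h : n ≤ k - 1) (h' : n - 1 ≤ k - 1),
        leadingMinor k q n h =
          1 / ((∏ j ∈ Finset.Icc 1 (n - 1), q j) * (q n) ^ 2) +
            (1 / q n) * leadingMinor k q (n - 1) h' by
    intro n hn hnk h h'
    exact H n (by omega) hnk h h'
  intro n hn
  induction n, hn using Nat.le_induction with
  | base =>
    intro hnk h h'
    have hq1 : 0 < q 1 := hq 1 le_rfl (by omega)
    have hL1 : leadingMinor k q 1 h = (q 1 + 1) / q 1 ^ 2 := by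
      rw [leadingMinor, Matrix.det_fin_one, Matrix.submatrix_apply]
      unfold hessExpBound
      rw [if_pos rfl, if_neg (by simp [Fin.castLE]; omega)]
      simp [Fin.castLE, hq0]
    have hL0 : leadingMinor k q 0 h' = 1 := by
      rw [leadingMinor]
      exact Matrix.det_fin_zero
    rw [hL1, hL0]
    simp only [Nat.sub_self, Finset.Icc_eq_empty_of_lt (by norm_num : (1:ℕ) > 0),
      Finset.prod_empty]
    field_simp
    ring
  | succ n hn1 ih =>
    intro hnk h h'
    obtain ⟨m, rfl⟩ : ∃ m, n = m + 1 := ⟨n - 1, by omega⟩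
    set A : Matrix (Fin (m+2)) (Fin (m+2)) ℝ :=
      (hessExpBound k q).submatrix (Fin.castLE h) (Fin.castLE h) with hAdef
    have hA : ∀ i j : Fin (m+2), (i:ℕ)+2 ≤ (j:ℕ) ∨ (j:ℕ)+2 ≤ (i:ℕ) → A i j = 0 := by
      intro i j hij
      exact hess_zero k q _ _ (by simpa using hij)
    have hm1 : m + 1 ≤ k - 1 := by omega
    have hmm : m ≤ k - 1 := by omega
    have hqm1 : 0 < q (m+1) := hq (m+1) (by omega) (by omega)
    have hqm2 : 0 < q (m+2) := hq (m+2) (by omega) (by omega)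
    have hP : 0 < ∏ j ∈ Finset.Icc 1 m, q j := by
      apply Finset.prod_pos
      intro j hj
      rw [Finset.mem_Icc] at hj
      exact hq j hj.1 (by omega)
    have hsub1 : A.submatrix Fin.castSucc Fin.castSucc =
        (hessExpBound k q).submatrix (Fin.castLE hm1) (Fin.castLE hm1) := by
      ext i j; rfl
    have hsub2 : A.submatrix (fun i : Fin m => i.castSucc.castSucc)
        (fun i : Fin m => i.castSucc.castSucc) =
        (hessExpBound k q).submatrix (Fin.castLE hmm) (Fin.castLE hmm) := by
      ext i j; rfl
    have hdLL : A (Fin.last (m+1)) (Fin.last (m+1)) = (q (m+2) + q (m+1)) / q (m+2) ^ 2 := by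
      rw [hAdef, Matrix.submatrix_apply]
      unfold hessExpBound
      rw [if_pos rfl, if_neg (by simp [Fin.castLE]; omega)]
      norm_num [Fin.castLE]
    have hdLP : A (Fin.last (m+1)) ((Fin.last m).castSucc) = -1 / q (m+2) := by
      rw [hAdef, Matrix.submatrix_apply]
      unfold hessExpBound
      rw [if_neg (by intro hh; have := congrArg Fin.val hh; simp [Fin.castLE] at this),
        if_pos (by simp [Fin.castLE])]
      congr 1
      simp [Fin.castLE]
    have hdPL : A ((Fin.last m).castSucc) (Fin.last (m+1)) = -1 / q (m+2) := by
      rw [hAdef, Matrix.submatrix_apply]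
      unfold hessExpBound
      rw [if_neg (by intro hh; have := congrArg Fin.val hh; simp [Fin.castLE] at this),
        if_pos (by simp [Fin.castLE])]
      congr 1
      simp [Fin.castLE]
    have hrec : leadingMinor k q (m+2) h =
        (q (m+2) + q (m+1)) / q (m+2) ^ 2 * leadingMinor k q (m+1) hm1
          - (-1 / q (m+2)) * (-1 / q (m+2)) * leadingMinor k q m hmm := by
      rw [leadingMinor, ← hAdef, det_tridiag_step m A hA, hdLL, hdLP, hdPL, hsub1, hsub2]
      rfl
    have hih := ih (by omega) hm1 (by omega : (m+1) - 1 ≤ k - 1)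
    have hih' : leadingMinor k q (m+1) hm1 =
        1 / ((∏ j ∈ Finset.Icc 1 m, q j) * q (m+1) ^ 2) +
          1 / q (m+1) * leadingMinor k q m hmm := by
      convert hih using 3 <;> rfl
    have hprodsucc : ∏ j ∈ Finset.Icc 1 (m+1), q j =
        (∏ j ∈ Finset.Icc 1 m, q j) * q (m+1) :=
      Finset.prod_Icc_succ_top (by omega) _
    show leadingMinor k q (m+2) h = _
    rw [hrec, hih']
    have h2 : leadingMinor k q (m+2-1) h' = leadingMinor k q (m+1) hm1 := rfl
    rw [h2, hih']
    show _ = 1 / ((∏ j ∈ Finset.Icc 1 (m+1), q j) * q (m+2) ^ 2) + _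
    rw [hprodsucc]
    field_simp
    ring
end

section
/- Let B ≥ 2 and k ≥ 3 be integers, H_B = Σ_{j=1}^{B} 1/j, and define L_1 = H_B and L_m = 1 + log(L_{m−1}) for m > 1. Suppose positive real numbers q_0 = 1, q_1, …, q_{k−1} satisfy q_{k−2} = H_B · q_{k−1} and q_{i−1}/q_i = 1 + log(q_i/q_{i+1}) for every i ∈ {1, …, k−2}. Then q_i = 1/∏_{j=1}^{i} L_{k−j} for every i ∈ {1, …, k−1}. -/
/-! The consecutive ratios `r_i = q_{i-1} / q_i` satisfy `r_{k-1} = H_B` and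
`r_i = 1 + log r_{i+1}`, which is the recursion defining `L` run backwards from `i = k - 1`;
hence `r_i = L_{k-i}`, and `q_i = q_0 / (r_1 ⋯ r_i)` by telescoping. -/

open Finset

theorem Finset.prod_Icc_sub_one_div_eq_div {K : Type*} [Field K] {f : ℕ → K} :
    ∀ {n : ℕ}, (∀ j ≤ n, f j ≠ 0) → ∏ j ∈ Icc 1 n, f (j - 1) / f j = f 0 / f n
  | 0, hf => by simp [hf 0 le_rfl]
  | n + 1, hf => by
    rw [prod_Icc_succ_top (Nat.le_add_left 1 n),
      prod_Icc_sub_one_div_eq_div fun j hj => hf j (by omega), Nat.add_sub_cancel,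
      div_mul_div_cancel₀ (hf n (by omega))]

theorem LseqAux_eq_of_recursion {HB : ℝ} {s : ℕ → ℝ} {n : ℕ} (h0 : s 0 = HB)
    (hsucc : ∀ d < n, s (d + 1) = 1 + Real.log (s d)) : ∀ d ≤ n, s d = LseqAux HB d
  | 0, _ => h0
  | d + 1, hd => by
    rw [hsucc d hd, LseqAux_eq_of_recursion h0 hsucc d (by omega), LseqAux]

theorem div_eq_LseqAux_of_first_order_conditions {HB : ℝ} {k : ℕ} {q : ℕ → ℝ}
    (hq : q (k - 1) ≠ 0)
    (hlast : q (k - 2) = HB * q (k - 1))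
    (hfoc : ∀ i, 1 ≤ i → i ≤ k - 2 → q (i - 1) / q i = 1 + Real.log (q i / q (i + 1)))
    {i : ℕ} (hi₁ : 1 ≤ i) (hi₂ : i ≤ k - 1) :
    q (i - 1) / q i = LseqAux HB (k - 1 - i) := by
  have hbase : q (k - 2) / q (k - 1) = HB := by
    rw [hlast, mul_div_cancel_right₀ _ hq]
  have hstep (d : ℕ) (hd : d < k - 2) : q (k - 2 - (d + 1)) / q (k - 1 - (d + 1)) =
      1 + Real.log (q (k - 2 - d) / q (k - 1 - d)) := by
    have h := hfoc (k - 2 - d) (by omega) (by omega)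
    rw [show k - 1 - (d + 1) = k - 2 - d by omega]
    rwa [show k - 2 - d - 1 = k - 2 - (d + 1) by omega,
      show k - 2 - d + 1 = k - 1 - d by omega] at h
  have h := LseqAux_eq_of_recursion (s := fun d => q (k - 2 - d) / q (k - 1 - d)) hbase hstep
    (k - 1 - i) (by omega)
  rwa [show k - 2 - (k - 1 - i) = i - 1 by omega, show k - 1 - (k - 1 - i) = i by omega] at h

theorem exp_bound_first_order_conditions_solution_general (k : ℕ)
    (HB : ℝ)
    (q : ℕ → ℝ) (hq0 : q 0 = 1) (hq : ∀ i : ℕ, i ≤ k - 1 → 0 < q i)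
    (hlast : q (k - 2) = HB * q (k - 1))
    (hfoc : ∀ i : ℕ, 1 ≤ i → i ≤ k - 2 →
      q (i - 1) / q i = 1 + Real.log (q i / q (i + 1))) :
    ∀ i : ℕ, 1 ≤ i → i ≤ k - 1 →
      q i = 1 / ∏ j ∈ Finset.Icc 1 i, LseqAux HB (k - j - 1) := by
  intro i hi₁ hi₂
  have hratios : ∏ j ∈ Icc 1 i, LseqAux HB (k - j - 1) = ∏ j ∈ Icc 1 i, q (j - 1) / q j :=
    prod_congr rfl fun j hj => by
      obtain ⟨hj₁, hj₂⟩ := mem_Icc.mp hj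
      rw [div_eq_LseqAux_of_first_order_conditions (hq _ le_rfl).ne' hlast hfoc hj₁
        (hj₂.trans hi₂), Nat.sub_right_comm]
  rw [hratios, prod_Icc_sub_one_div_eq_div fun j hj => (hq j (hj.trans hi₂)).ne', hq0,
    one_div_one_div]

/-- for `B ≥ 2`, `k ≥ 3`, `H_B` the `B`-th harmonic number, if positive
reals `q_0 = 1, q_1, …, q_{k−1}` satisfy the first-order optimality conditions
`q_{k−2} = H_B · q_{k−1}` and `q_{i−1}/q_i = 1 + log(q_i/q_{i+1})` for
`i ∈ {1, …, k−2}`, then `q_i = 1/∏_{j=1}^i L_{k−j}` for every `i ∈ {1, …, k−1}`. -/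
theorem exp_bound_first_order_conditions_solution (B k : ℕ) (hB : 2 ≤ B) (hk : 3 ≤ k)
    (HB : ℝ) (hHB : HB = ∑ j ∈ Finset.range B, 1 / ((j : ℝ) + 1))
    (q : ℕ → ℝ) (hq0 : q 0 = 1) (hq : ∀ i : ℕ, i ≤ k - 1 → 0 < q i)
    (hlast : q (k - 2) = HB * q (k - 1))
    (hfoc : ∀ i : ℕ, 1 ≤ i → i ≤ k - 2 →
      q (i - 1) / q i = 1 + Real.log (q i / q (i + 1))) :
    ∀ i : ℕ, 1 ≤ i → i ≤ k - 1 →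
      q i = 1 / ∏ j ∈ Finset.Icc 1 i, LseqAux HB (k - j - 1) :=
  exp_bound_first_order_conditions_solution_general k HB q hq0 hq hlast hfoc
end
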